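/- arXiv:2204.05004 — 14 statements merged into one kernel-verified Lean document; each statement's English description precedes it below -/
import Mathlib

section
/- In any weak brace (S, +, ∘), the operations + and ∘ coincide on idempotents: for all idempotents e₁, e₂ (with respect to +), e₁ + e₂ = e₁ ∘ e₂. -/
section
variable {S : Type*}

/-- Key lemma: in an inverse semigroup, for idempotents e, f,
    e*f is idempotent, and (f*e)*(f*e) = e*f. -/
lemma wb_key (op : S → S → S) (inv : S → S)
    (assoc : ∀ a b c, op (op a b) c = op a (op b c))
    (inv1 : ∀ a, op (op a (inv a)) a = a)
    (inv2 : ∀ a, op (op (inv a) a) (inv a) = inv a)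
    (uniq : ∀ a b, op (op a b) a = a → op (op b a) b = b → b = inv a)
    (e f : S) (he : op e e = e) (hf : op f f = f) :
    op (op e f) (op e f) = op e f ∧ op (op f e) (op f e) = op e f := by
  have he' : ∀ y, op e (op e y) = op e y := fun y => by rw [← assoc, he]
  have hf' : ∀ y, op f (op f y) = op f y := fun y => by rw [← assoc, hf]
  have A : op e (op f (op (inv (op e f)) (op e f))) = op e f := by
    have := inv1 (op e f); simp only [assoc] at this; exact this
  have Bn : op (inv (op e f)) (op e (op f (inv (op e f)))) = inv (op e f) := by
    have := inv2 (op e f); simp only [assoc] at this; exact this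
  have Bext : ∀ y, op (inv (op e f)) (op e (op f (op (inv (op e f)) y)))
      = op (inv (op e f)) y := by
    intro y
    have h0 : op (op (inv (op e f)) (op e (op f (inv (op e f))))) y
        = op (inv (op e f)) y := by rw [Bn]
    simp only [assoc] at h0; exact h0
  have ha : op (op (op e f) (op (op f (inv (op e f))) e)) (op e f) = op e f := by
    simp only [assoc]
    rw [hf', he']
    exact A
  have hb : op (op (op (op f (inv (op e f))) e) (op e f)) (op (op f (inv (op e f))) e)
      = op (op f (inv (op e f))) e := by
    simp only [assoc]
    rw [he', hf']
    rw [Bext]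
  have hbx : op (op f (inv (op e f))) e = inv (op e f) := uniq (op e f) _ ha hb
  have hxx : op (inv (op e f)) (inv (op e f)) = inv (op e f) := by
    rw [← hbx]
    simp only [assoc]
    rw [Bext]
  have hux : op e f = inv (inv (op e f)) := by
    apply uniq
    · have := inv2 (op e f); exact this
    · have := inv1 (op e f); exact this
  have hxinvx : inv (op e f) = inv (inv (op e f)) := by
    apply uniq
    · rw [hxx]; exact hxx
    · rw [hxx]; exact hxx
  have hux2 : op e f = inv (op e f) := hux.trans hxinvx.symm
  constructor
  · rw [hux2]; exact hxx
  · have step : op (op f e) (op f e) = op (op f (op e f)) e := by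
      simp only [assoc]
    rw [step, hux2]
    exact hbx

lemma wb_comm (op : S → S → S) (inv : S → S)
    (assoc : ∀ a b c, op (op a b) c = op a (op b c))
    (inv1 : ∀ a, op (op a (inv a)) a = a)
    (inv2 : ∀ a, op (op (inv a) a) (inv a) = inv a)
    (uniq : ∀ a b, op (op a b) a = a → op (op b a) b = b → b = inv a)
    (e f : S) (he : op e e = e) (hf : op f f = f) :
    op e f = op f e := by
  obtain ⟨-, h2⟩ := wb_key op inv assoc inv1 inv2 uniq e f he hf
  obtain ⟨h3, -⟩ := wb_key op inv assoc inv1 inv2 uniq f e hf he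
  exact h2.symm.trans h3

lemma wb_idem_inv (op : S → S → S) (inv : S → S)
    (uniq : ∀ a b, op (op a b) a = a → op (op b a) b = b → b = inv a)
    (e : S) (he : op e e = e) : inv e = e :=
  (uniq e e (by rw [he, he]) (by rw [he, he])).symm

end

theorem stmt2 {S : Type*}
    (add mul : S → S → S) (neg invc : S → S)
    (addassoc : ∀ a b c, add (add a b) c = add a (add b c))
    (addinv1 : ∀ a, add (add a (neg a)) a = a)
    (addinv2 : ∀ a, add (add (neg a) a) (neg a) = neg a)
    (adduniq : ∀ a b, add (add a b) a = a → add (add b a) b = b → b = neg a)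
    (mulassoc : ∀ a b c, mul (mul a b) c = mul a (mul b c))
    (mulinv1 : ∀ a, mul (mul a (invc a)) a = a)
    (mulinv2 : ∀ a, mul (mul (invc a) a) (invc a) = invc a)
    (muluniq : ∀ a b, mul (mul a b) a = a → mul (mul b a) b = b → b = invc a)
    (dist : ∀ a b c, mul a (add b c) = add (add (mul a b) (neg a)) (mul a c))
    (winv : ∀ a, mul a (invc a) = add (neg a) a)
    : ∀ e₁ e₂, add e₁ e₁ = e₁ → add e₂ e₂ = e₂ → add e₁ e₂ = mul e₁ e₂ := by
  intro e₁ e₂ h1 h2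
  have n1 : neg e₁ = e₁ := wb_idem_inv add neg adduniq e₁ h1
  have n2 : neg e₂ = e₂ := wb_idem_inv add neg adduniq e₂ h2
  -- any +-idempotent is a ∘-idempotent
  have mulidem : ∀ e, add e e = e → mul e e = e := by
    intro e he
    have hne : neg e = e := wb_idem_inv add neg adduniq e he
    have h0 : mul e (invc e) = e := by rw [winv e, hne]; exact he
    calc mul e e = mul (mul e (invc e)) (mul e (invc e)) := by rw [h0]
      _ = mul e (mul (mul (invc e) e) (invc e)) := by simp only [mulassoc]
      _ = mul e (invc e) := by rw [mulinv2]
      _ = e := h0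
  have m1 : mul e₁ e₁ = e₁ := mulidem e₁ h1
  have m2 : mul e₂ e₂ = e₂ := mulidem e₂ h2
  -- f := mul e₁ e₂ is a ∘-idempotent
  have mf : mul (mul e₁ e₂) (mul e₁ e₂) = mul e₁ e₂ :=
    (wb_key mul invc mulassoc mulinv1 mulinv2 muluniq e₁ e₂ m1 m2).1
  have fi : invc (mul e₁ e₂) = mul e₁ e₂ := wb_idem_inv mul invc muluniq _ mf
  -- f is a +-idempotent
  have hnf' : add (neg (mul e₁ e₂)) (mul e₁ e₂) = mul e₁ e₂ := by
    rw [← winv, fi]; exact mf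
  have fadd : add (mul e₁ e₂) (mul e₁ e₂) = mul e₁ e₂ := by
    calc add (mul e₁ e₂) (mul e₁ e₂)
        = add (add (neg (mul e₁ e₂)) (mul e₁ e₂)) (add (neg (mul e₁ e₂)) (mul e₁ e₂)) := by
          rw [hnf']
      _ = add (neg (mul e₁ e₂)) (add (add (mul e₁ e₂) (neg (mul e₁ e₂))) (mul e₁ e₂)) := by
          simp only [addassoc]
      _ = add (neg (mul e₁ e₂)) (mul e₁ e₂) := by rw [addinv1]
      _ = mul e₁ e₂ := hnf'
  have ce1 : add (mul e₁ e₂) e₁ = add e₁ (mul e₁ e₂) :=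
    wb_comm add neg addassoc addinv1 addinv2 adduniq _ _ fadd h1
  have ce2 : add (mul e₁ e₂) e₂ = add e₂ (mul e₁ e₂) :=
    wb_comm add neg addassoc addinv1 addinv2 adduniq _ _ fadd h2
  have cmul : mul e₂ e₁ = mul e₁ e₂ :=
    (wb_comm mul invc mulassoc mulinv1 mulinv2 muluniq e₁ e₂ m1 m2).symm
  -- f + e₁ = f
  have hd1 : mul e₁ e₂ = add (add (mul e₁ e₂) e₁) (mul e₁ e₂) := by
    have := dist e₁ e₂ e₂
    rw [h2, n1] at this
    exact this
  have fe1 : add (mul e₁ e₂) e₁ = mul e₁ e₂ := by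
    calc add (mul e₁ e₂) e₁ = add (add (mul e₁ e₂) (mul e₁ e₂)) e₁ := by rw [fadd]
      _ = add (mul e₁ e₂) (add (mul e₁ e₂) e₁) := by rw [addassoc]
      _ = add (mul e₁ e₂) (add e₁ (mul e₁ e₂)) := by rw [ce1]
      _ = add (add (mul e₁ e₂) e₁) (mul e₁ e₂) := by rw [addassoc]
      _ = mul e₁ e₂ := hd1.symm
  -- f + e₂ = f
  have hd2 : mul e₁ e₂ = add (add (mul e₁ e₂) e₂) (mul e₁ e₂) := by
    have := dist e₂ e₁ e₁
    rw [h1, n2, cmul] at this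
    exact this
  have fe2 : add (mul e₁ e₂) e₂ = mul e₁ e₂ := by
    calc add (mul e₁ e₂) e₂ = add (add (mul e₁ e₂) (mul e₁ e₂)) e₂ := by rw [fadd]
      _ = add (mul e₁ e₂) (add (mul e₁ e₂) e₂) := by rw [addassoc]
      _ = add (mul e₁ e₂) (add e₂ (mul e₁ e₂)) := by rw [ce2]
      _ = add (add (mul e₁ e₂) e₂) (mul e₁ e₂) := by rw [addassoc]
      _ = mul e₁ e₂ := hd2.symm
  -- f + (e₁ + e₂) = f
  have fh : add (mul e₁ e₂) (add e₁ e₂) = mul e₁ e₂ := by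
    rw [← addassoc, fe1, fe2]
  -- h := e₁ + e₂ is a +-idempotent, hence ∘-idempotent
  have hadd : add (add e₁ e₂) (add e₁ e₂) = add e₁ e₂ :=
    (wb_key add neg addassoc addinv1 addinv2 adduniq e₁ e₂ h1 h2).1
  have hmul : mul (add e₁ e₂) (add e₁ e₂) = add e₁ e₂ := mulidem _ hadd
  have nh : neg (add e₁ e₂) = add e₁ e₂ := wb_idem_inv add neg adduniq _ hadd
  -- mul e₁ (e₁+e₂) = f
  have he1h : mul e₁ (add e₁ e₂) = mul e₁ e₂ := by
    have := dist e₁ e₁ e₂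
    rw [m1, n1, h1] at this
    rw [this, ← ce1, fe1]
  -- mul e₂ (e₁+e₂) = f
  have he2h : mul e₂ (add e₁ e₂) = mul e₁ e₂ := by
    have := dist e₂ e₁ e₂
    rw [m2, n2, cmul] at this
    rw [this, addassoc, h2, fe2]
  -- mul (e₁+e₂) e₁ = f, mul (e₁+e₂) e₂ = f
  have mhe1 : mul (add e₁ e₂) e₁ = mul e₁ e₂ := by
    rw [← wb_comm mul invc mulassoc mulinv1 mulinv2 muluniq e₁ (add e₁ e₂) m1 hmul]
    exact he1h
  have mhe2 : mul (add e₁ e₂) e₂ = mul e₁ e₂ := by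
    rw [← wb_comm mul invc mulassoc mulinv1 mulinv2 muluniq e₂ (add e₁ e₂) m2 hmul]
    exact he2h
  -- final computation
  have final := dist (add e₁ e₂) e₁ e₂
  rw [hmul, mhe1, mhe2, nh, fh, fadd] at final
  exact final
end

section
/- Let 𝔯 be a Rota–Baxter operator on a Clifford semigroup (S,+). Then 𝔯 maps idempotents to idempotents: 𝔯(E(S)) ⊆ E(S). -/
theorem stmt4 {S : Type*}
    (add : S → S → S) (neg : S → S)
    (assoc : ∀ a b c, add (add a b) c = add a (add b c))
    (inv1 : ∀ a, add (add a (neg a)) a = a)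
    (inv2 : ∀ a, add (add (neg a) a) (neg a) = neg a)
    (inv_unique : ∀ a b, add (add a b) a = a → add (add b a) b = b → b = neg a)
    (comm0 : ∀ a, add a (neg a) = add (neg a) a)
    (central : ∀ e, add e e = e → ∀ x, add e x = add x e)
    (R : S → S)
    (hRB1 : ∀ a b, add (R a) (R b) = R (add (add (add a (R a)) b) (neg (R a))))
    (hRB2 : ∀ a, add (add a (R a)) (neg (R a)) = a)
    : ∀ e, add e e = e → add (R e) (R e) = R e := by
  intro e he
  have h1 : add (add (add e (R e)) e) (neg (R e)) = e := by
    calc add (add (add e (R e)) e) (neg (R e))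
        = add (add e (add (R e) e)) (neg (R e)) := by rw [assoc e (R e) e]
      _ = add (add e (add e (R e))) (neg (R e)) := by rw [← central e he (R e)]
      _ = add (add (add e e) (R e)) (neg (R e)) := by rw [← assoc e e (R e)]
      _ = add (add e (R e)) (neg (R e)) := by rw [he]
      _ = e := hRB2 e
  rw [hRB1 e e, h1]
end

section
/- Let 𝔯 be a Rota–Baxter operator on a Clifford semigroup (S,+). Then 𝔯(a) = 𝔯(a) + 𝔯(a⁰) for every a ∈ S, where a⁰ = a + (-a). -/
theorem stmt6 {S : Type*}
    (add : S → S → S) (neg : S → S)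
    (assoc : ∀ a b c, add (add a b) c = add a (add b c))
    (inv1 : ∀ a, add (add a (neg a)) a = a)
    (inv2 : ∀ a, add (add (neg a) a) (neg a) = neg a)
    (inv_unique : ∀ a b, add (add a b) a = a → add (add b a) b = b → b = neg a)
    (comm0 : ∀ a, add a (neg a) = add (neg a) a)
    (central : ∀ e, add e e = e → ∀ x, add e x = add x e)
    (R : S → S)
    (hRB1 : ∀ a b, add (R a) (R b) = R (add (add (add a (R a)) b) (neg (R a))))
    (hRB2 : ∀ a, add (add a (R a)) (neg (R a)) = a)
    : ∀ a, R a = add (R a) (R (add a (neg a))) := by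
  intro a
  have idem : add (add a (neg a)) (add a (neg a)) = add a (neg a) := by
    rw [← assoc, inv1]
  have hc := central _ idem (R a)
  have ha : add a (add a (neg a)) = a := (central _ idem a).symm.trans (inv1 a)
  have key : add (add (add a (R a)) (add a (neg a))) (neg (R a)) = a := by
    rw [assoc a (R a), ← hc, ← assoc a, ha, hRB2]
  calc R a = R (add (add (add a (R a)) (add a (neg a))) (neg (R a))) := by rw [key]
    _ = add (R a) (R (add a (neg a))) := (hRB1 a (add a (neg a))).symm
end

section
/- Let 𝔯 be a Rota–Baxter operator on a Clifford semigroup (S,+). Then a = a + 𝔯(a⁰) for every a ∈ S. -/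
theorem stmt7 {S : Type*}
    (add : S → S → S) (neg : S → S)
    (assoc : ∀ a b c, add (add a b) c = add a (add b c))
    (inv1 : ∀ a, add (add a (neg a)) a = a)
    (inv2 : ∀ a, add (add (neg a) a) (neg a) = neg a)
    (inv_unique : ∀ a b, add (add a b) a = a → add (add b a) b = b → b = neg a)
    (comm0 : ∀ a, add a (neg a) = add (neg a) a)
    (central : ∀ e, add e e = e → ∀ x, add e x = add x e)
    (R : S → S)
    (hRB1 : ∀ a b, add (R a) (R b) = R (add (add (add a (R a)) b) (neg (R a))))
    (hRB2 : ∀ a, add (add a (R a)) (neg (R a)) = a)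
    : ∀ a, a = add a (R (add a (neg a))) := by
  intro a
  set e := add a (neg a) with he
  -- e is idempotent
  have hee : add e e = e := by
    calc add e e = add a (add (add (neg a) a) (neg a)) := by
          rw [he, assoc, ← assoc (neg a)]
      _ = e := by rw [inv2]
  -- key inner simplification: (e + R e) + e + (- R e) = e
  have hcent := central e hee
  have hinner : add (add (add e (R e)) e) (neg (R e)) = e := by
    have h1 : add (add e (R e)) e = add e (R e) := by
      rw [assoc, ← hcent (R e), ← assoc, hee]
    rw [h1, hRB2]
  -- R e is idempotent
  have hRee : add (R e) (R e) = R e := by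
    have := hRB1 e e
    rw [hinner] at this
    exact this
  -- hence R e = neg (R e)
  have hneg : R e = neg (R e) := by
    apply inv_unique
    · rw [hRee, hRee]
    · rw [hRee, hRee]
  -- hence e + R e = e
  have heRe : add e (R e) = e := by
    have := hRB2 e
    rw [← hneg, assoc, hRee] at this
    exact this
  -- a + e = a
  have hae : add a e = a := by
    rw [← central e hee a, he, inv1]
  calc a = add a e := hae.symm
    _ = add a (add e (R e)) := by rw [heRe]
    _ = add (add a e) (R e) := (assoc a e (R e)).symm
    _ = add a (R e) := by rw [hae]
end

section
/- Let 𝔯 be a Rota–Baxter operator on a Clifford semigroup (S,+). Then 𝔯(a⁰) = 𝔯(a)⁰ for every a ∈ S. -/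
theorem stmt9 {S : Type*}
    (add : S → S → S) (neg : S → S)
    (assoc : ∀ a b c, add (add a b) c = add a (add b c))
    (inv1 : ∀ a, add (add a (neg a)) a = a)
    (inv2 : ∀ a, add (add (neg a) a) (neg a) = neg a)
    (inv_unique : ∀ a b, add (add a b) a = a → add (add b a) b = b → b = neg a)
    (comm0 : ∀ a, add a (neg a) = add (neg a) a)
    (central : ∀ e, add e e = e → ∀ x, add e x = add x e)
    (R : S → S)
    (hRB1 : ∀ a b, add (R a) (R b) = R (add (add (add a (R a)) b) (neg (R a))))
    (hRB2 : ∀ a, add (add a (R a)) (neg (R a)) = a)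
    : ∀ a, R (add a (neg a)) = add (R a) (neg (R a)) := by
  intro a
  have sq : ∀ x, add (add x (neg x)) (add x (neg x)) = add x (neg x) := by
    intro x; rw [← assoc, inv1]
  have cent0 : ∀ x y, add (add x (neg x)) y = add y (add x (neg x)) :=
    fun x y => central _ (sq x) y
  have xx0 : ∀ x, add x (add x (neg x)) = x := by
    intro x; rw [← cent0, inv1]
  have hRB2' : ∀ x, add x (add (R x) (neg (R x))) = x := by
    intro x; rw [← assoc, hRB2]
  -- Step A : R a + R(a⁰) = R a
  have stepA : add (R a) (R (add a (neg a))) = R a := by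
    rw [hRB1 a (add a (neg a)), ← cent0 a (add a (R a)), ← assoc, inv1, hRB2]
  -- Step C : R(a⁰) = R a + R b  for b = (−R a + −a) + R a
  have argC : add (add (add a (R a)) (add (add (neg (R a)) (neg a)) (R a))) (neg (R a))
      = add a (neg a) := by
    rw [← assoc (add a (R a)) (add (neg (R a)) (neg a)) (R a),
        ← assoc (add a (R a)) (neg (R a)) (neg a), hRB2,
        assoc (add a (neg a)) (R a) (neg (R a)), comm0 a, assoc, hRB2']
  have stepC : add (R a) (R (add (add (neg (R a)) (neg a)) (R a))) = R (add a (neg a)) := by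
    rw [hRB1, argC]
  -- Step D : R(a)⁰ + R(a⁰) = R(a)⁰
  have stepD : add (add (R a) (neg (R a))) (R (add a (neg a))) = add (R a) (neg (R a)) := by
    rw [comm0 (R a), assoc, stepA]
  -- Step E : R(a)⁰ + R(a⁰) = R(a⁰)
  have stepE : add (add (R a) (neg (R a))) (R (add a (neg a))) = R (add a (neg a)) := by
    rw [← stepC, ← assoc, cent0 (R a) (R a), xx0]
  rw [← stepE, stepD]
end

section
/- If 𝔯 is a Rota–Baxter operator on a Clifford semigroup (S,+), then the map 𝔯^op: S → S defined by 𝔯^op(a) = -a + 𝔯(-a) is also a Rota–Baxter operator on (S,+). -/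
theorem stmt10 {S : Type*}
    (add : S → S → S) (neg : S → S)
    (assoc : ∀ a b c, add (add a b) c = add a (add b c))
    (inv1 : ∀ a, add (add a (neg a)) a = a)
    (inv2 : ∀ a, add (add (neg a) a) (neg a) = neg a)
    (inv_unique : ∀ a b, add (add a b) a = a → add (add b a) b = b → b = neg a)
    (comm0 : ∀ a, add a (neg a) = add (neg a) a)
    (central : ∀ e, add e e = e → ∀ x, add e x = add x e)
    (R : S → S)
    (hRB1 : ∀ a b, add (R a) (R b) = R (add (add (add a (R a)) b) (neg (R a))))
    (hRB2 : ∀ a, add (add a (R a)) (neg (R a)) = a)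
    (Rop : S → S)
    (hRop : ∀ a, Rop a = add (neg a) (R (neg a))) :
    (∀ a b, add (Rop a) (Rop b) = Rop (add (add (add a (Rop a)) b) (neg (Rop a)))) ∧
      (∀ a, add (add a (Rop a)) (neg (Rop a)) = a) := by
  have nn : ∀ a, neg (neg a) = a := fun a => (inv_unique (neg a) a (inv2 a) (inv1 a)).symm
  have idem : ∀ a, add (add a (neg a)) (add a (neg a)) = add a (neg a) := by
    intro a; rw [assoc, ← assoc (neg a) a (neg a), inv2]
  have cent1 : ∀ a x, add (add a (neg a)) x = add x (add a (neg a)) :=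
    fun a x => central _ (idem a) x
  have cent2 : ∀ a x, add (add (neg a) a) x = add x (add (neg a) a) := by
    intro a x; rw [← comm0]; exact cent1 a x
  have C1 : ∀ a x, add a (add (neg a) (add a x)) = add a x := by
    intro a x; rw [← assoc, ← assoc, inv1]
  have C2 : ∀ a x, add (neg a) (add a (add (neg a) x)) = add (neg a) x := by
    intro a x; rw [← assoc, ← assoc, inv2]
  have ae : ∀ a, add a (add a (neg a)) = a := by
    intro a; rw [← cent1 a a]; exact inv1 a
  have neg_add : ∀ a b, neg (add a b) = add (neg b) (neg a) := by
    intro a b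
    refine (inv_unique _ _ ?_ ?_).symm
    · simp only [assoc]
      rw [← assoc (neg a) a b, cent2 a b, C1 b (add (neg a) a), ← cent2 a b,
        ← assoc a (add (neg a) a) b, ← assoc a (neg a) a, inv1]
    · simp only [assoc]
      rw [← assoc b (neg b) (neg a), cent1 b (neg a), C2 a (add b (neg b)),
        ← cent1 b (neg a), ← assoc (neg b) (add b (neg b)) (neg a),
        ← assoc (neg b) b (neg b), inv2]
  have hRB2' : ∀ a, add a (add (R a) (neg (R a))) = a := by
    intro a; rw [← assoc]; exact hRB2 a
  constructor
  · intro a b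
    have hc : neg (add (add (add a (Rop a)) b) (neg (Rop a))) =
        add (add (add (neg a) (R (neg a))) (neg b)) (neg (R (neg a))) := by
      rw [hRop a, neg_add, nn, neg_add, neg_add, neg_add, nn]
      simp only [assoc]
      rw [← cent1 a (neg (R (neg a))), ← assoc (neg b) (add a (neg a)) (neg (R (neg a))),
        ← cent1 a (neg b), assoc (add a (neg a)) (neg b) (neg (R (neg a))),
        ← assoc (R (neg a)) (add a (neg a)) (add (neg b) (neg (R (neg a)))),
        ← cent1 a (R (neg a)), assoc (add a (neg a)) (R (neg a)) (add (neg b) (neg (R (neg a)))),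
        ← assoc (neg a) (add a (neg a)) (add (R (neg a)) (add (neg b) (neg (R (neg a))))),
        ← assoc (neg a) a (neg a), inv2]
    rw [hRop (add (add (add a (Rop a)) b) (neg (Rop a))), hc, ← hRB1 (neg a) (neg b),
      hRop a, hRop b]
    -- goal: (-a+u) + (-b+v) = (((-a+u)+-b)+-u) + (u+v)
    simp only [assoc]
    rw [← assoc (neg (R (neg a))) (R (neg a)) (R (neg b)), ← comm0 (R (neg a)),
      ← assoc (neg b) (add (R (neg a)) (neg (R (neg a)))) (R (neg b)),
      ← cent1 (R (neg a)) (neg b),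
      assoc (add (R (neg a)) (neg (R (neg a)))) (neg b) (R (neg b)),
      ← assoc (R (neg a)) (add (R (neg a)) (neg (R (neg a)))) (add (neg b) (R (neg b))),
      ae (R (neg a))]
  · intro a
    rw [hRop, neg_add, nn]
    simp only [assoc]
    rw [← assoc (R (neg a)) (neg (R (neg a))) a, ← assoc (neg a) _ a, hRB2' (neg a),
      ← assoc, inv1]
end

section
/- Let (S,+) be a Clifford semigroup and φ an idempotent endomorphism of (S,+) fixing every idempotent of S. Then the map 𝔯 = -φ (i.e., 𝔯(a) = -φ(a)) is a Rota–Baxter operator on (S,+). -/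
theorem stmt11 {S : Type*}
    (add : S → S → S) (neg : S → S)
    (assoc : ∀ a b c, add (add a b) c = add a (add b c))
    (inv1 : ∀ a, add (add a (neg a)) a = a)
    (inv2 : ∀ a, add (add (neg a) a) (neg a) = neg a)
    (inv_unique : ∀ a b, add (add a b) a = a → add (add b a) b = b → b = neg a)
    (comm0 : ∀ a, add a (neg a) = add (neg a) a)
    (central : ∀ e, add e e = e → ∀ x, add e x = add x e)
    (φ : S → S)
    (hhom : ∀ a b, φ (add a b) = add (φ a) (φ b))
    (hidem : ∀ a, φ (φ a) = φ a)
    (hfix : ∀ e, add e e = e → φ e = e)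
    (R : S → S) (hR : ∀ a, R a = neg (φ a)) :
    (∀ a b, add (R a) (R b) = R (add (add (add a (R a)) b) (neg (R a)))) ∧
      (∀ a, add (add a (R a)) (neg (R a)) = a) := by
  -- neg is an involution
  have neg_neg : ∀ a, neg (neg a) = a := fun a =>
    (inv_unique (neg a) a (inv2 a) (inv1 a)).symm
  -- a + (-a) is idempotent
  have idemE : ∀ a, add (add a (neg a)) (add a (neg a)) = add a (neg a) := by
    intro a
    calc add (add a (neg a)) (add a (neg a))
        = add (add (add a (neg a)) a) (neg a) := by simp only [assoc]
      _ = add a (neg a) := by rw [inv1]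
  -- -a + a is idempotent
  have idemE' : ∀ a, add (add (neg a) a) (add (neg a) a) = add (neg a) a := by
    intro a
    rw [← comm0]; exact idemE a
  -- neg of an idempotent is itself
  have neg_idem : ∀ e, add e e = e → neg e = e := by
    intro e he
    have h1 : add (add e e) e = e := by rw [he, he]
    exact (inv_unique e e h1 h1).symm
  -- neg of a sum
  have neg_add : ∀ a b, neg (add a b) = add (neg b) (neg a) := by
    intro a b
    have h1 : add (add (add a b) (add (neg b) (neg a))) (add a b) = add a b := by
      calc add (add (add a b) (add (neg b) (neg a))) (add a b)
          = add a (add (add (add b (neg b)) (add (neg a) a)) b) := by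
            try simp only [assoc]
        _ = add a (add (add (add (neg a) a) (add b (neg b))) b) := by
            rw [central _ (idemE b) (add (neg a) a)]
        _ = add (add (add a (neg a)) a) (add (add b (neg b)) b) := by
            try simp only [assoc]
        _ = add a b := by rw [inv1, inv1]
    have h2 : add (add (add (neg b) (neg a)) (add a b)) (add (neg b) (neg a))
        = add (neg b) (neg a) := by
      calc add (add (add (neg b) (neg a)) (add a b)) (add (neg b) (neg a))
          = add (neg b) (add (add (add (neg a) a) (add b (neg b))) (neg a)) := by
            try simp only [assoc]
        _ = add (neg b) (add (add (add b (neg b)) (add (neg a) a)) (neg a)) := by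
            rw [central _ (idemE' a) (add b (neg b))]
        _ = add (add (add (neg b) b) (neg b)) (add (add (neg a) a) (neg a)) := by
            try simp only [assoc]
        _ = add (neg b) (neg a) := by rw [inv2, inv2]
    exact (inv_unique (add a b) (add (neg b) (neg a)) h1 h2).symm
  -- φ commutes with neg
  have hneg : ∀ a, φ (neg a) = neg (φ a) := by
    intro a
    have h1 : add (add (φ a) (φ (neg a))) (φ a) = φ a := by
      rw [← hhom, ← hhom, inv1]
    have h2 : add (add (φ (neg a)) (φ a)) (φ (neg a)) = φ (neg a) := by
      rw [← hhom, ← hhom, inv2]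
    exact inv_unique (φ a) (φ (neg a)) h1 h2
  constructor
  · intro a b
    simp only [hR, neg_neg]
    have key : add (neg (φ a)) (add (φ a) (neg (φ a))) = neg (φ a) := by
      rw [← assoc]; exact inv2 (φ a)
    calc add (neg (φ a)) (neg (φ b))
        = add (add (neg (φ a)) (add (φ a) (neg (φ a)))) (neg (φ b)) := by rw [key]
      _ = add (neg (φ a)) (add (add (φ a) (neg (φ a))) (neg (φ b))) := by rw [assoc]
      _ = add (neg (φ a)) (add (neg (φ b)) (add (φ a) (neg (φ a)))) := by
          rw [central _ (idemE (φ a)) (neg (φ b))]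
      _ = neg (φ (add (add (add a (neg (φ a))) b) (φ a))) := by
          simp only [hhom, hidem, hneg, neg_add, neg_neg,
            neg_idem _ (idemE (φ a))]
          try simp only [assoc]
  · intro a
    simp only [hR, neg_neg]
    have e_eq : add (neg (φ a)) (φ a) = add a (neg a) := by
      rw [← comm0 (φ a), ← hneg, ← hhom, hfix _ (idemE a)]
    calc add (add a (neg (φ a))) (φ a)
        = add a (add (neg (φ a)) (φ a)) := by rw [assoc]
      _ = add a (add a (neg a)) := by rw [e_eq]
      _ = a := by rw [comm0, ← assoc]; exact inv1 a
end

section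
/- Let 𝔯 be a Rota–Baxter operator on a Clifford semigroup (S,+) and define a ∘ b = a + 𝔯(a) + b - 𝔯(a). Then (S, ∘) is a Clifford semigroup, with the inverse of a in (S,∘) given by a⁻ = -𝔯(a) - a + 𝔯(a). -/
theorem stmt13 {S : Type*}
    (add : S → S → S) (neg : S → S)
    (assoc : ∀ a b c, add (add a b) c = add a (add b c))
    (inv1 : ∀ a, add (add a (neg a)) a = a)
    (inv2 : ∀ a, add (add (neg a) a) (neg a) = neg a)
    (inv_unique : ∀ a b, add (add a b) a = a → add (add b a) b = b → b = neg a)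
    (comm0 : ∀ a, add a (neg a) = add (neg a) a)
    (central : ∀ e, add e e = e → ∀ x, add e x = add x e)
    (R : S → S)
    (hRB1 : ∀ a b, add (R a) (R b) = R (add (add (add a (R a)) b) (neg (R a))))
    (hRB2 : ∀ a, add (add a (R a)) (neg (R a)) = a)
    (mul : S → S → S) (i : S → S)
    (hmul : ∀ a b, mul a b = add (add (add a (R a)) b) (neg (R a)))
    (hi : ∀ a, i a = add (add (neg (R a)) (neg a)) (R a))
    : (∀ a b c, mul (mul a b) c = mul a (mul b c)) ∧
      (∀ a, mul (mul a (i a)) a = a) ∧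
      (∀ a, mul (mul (i a) a) (i a) = i a) ∧
      (∀ a b, mul (mul a b) a = a → mul (mul b a) b = b → b = i a) ∧
      (∀ a, mul a (i a) = mul (i a) a) ∧
      (∀ e, mul e e = e → ∀ x, mul e x = mul x e) := by
  -- helper: move a central element to the front
  have mv : ∀ c, (∀ x, add c x = add x c) → ∀ p q, add p (add c q) = add c (add p q) := by
    intro c hc p q
    rw [← assoc, ← hc p, assoc]
  -- absorption helper
  have abs : ∀ p c, add p c = p → ∀ q, add p (add c q) = add p q := by
    intro p c h q
    rw [← assoc, h]
  have grp : ∀ x z, add x (add (neg x) z) = add (add x (neg x)) z :=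
    fun x z => (assoc x (neg x) z).symm
  have sandw : ∀ x z, add (neg x) (add x z) = add (add x (neg x)) z := by
    intro x z
    rw [← assoc, ← comm0]
  -- E x := x + (-x) is idempotent
  have Eidem : ∀ a, add (add a (neg a)) (add a (neg a)) = add a (neg a) := by
    intro a
    rw [← assoc, inv1]
  have Ec : ∀ a x, add (add a (neg a)) x = add x (add a (neg a)) :=
    fun a => central _ (Eidem a)
  have EaR : ∀ a, add a (add a (neg a)) = a := by
    intro a; rw [← Ec, inv1]
  have EnL : ∀ a, add (add a (neg a)) (neg a) = neg a := by
    intro a; rw [comm0]; exact inv2 a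
  have EnR : ∀ a, add (neg a) (add a (neg a)) = neg a := by
    intro a; rw [← Ec]; exact EnL a
  have nn : ∀ a, neg (neg a) = a := by
    intro a
    exact (inv_unique (neg a) a (inv2 a) (inv1 a)).symm
  have negidem : ∀ e, add e e = e → neg e = e := by
    intro e h
    have h1 : add (add e e) e = e := by rw [h]; exact h
    exact (inv_unique e e h1 h1).symm
  have negadd : ∀ a b, neg (add a b) = add (neg b) (neg a) := by
    intro a b
    refine (inv_unique (add a b) (add (neg b) (neg a)) ?_ ?_).symm
    · -- ((a+b) + (-b + -a)) + (a+b) = a+b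
      calc add (add (add a b) (add (neg b) (neg a))) (add a b)
          = add a (add b (add (neg b) (add (neg a) (add a b)))) := by
            simp only [assoc]
        _ = add a (add b (add (neg b) (add (add a (neg a)) b))) := by rw [sandw]
        _ = add a (add b (add (add a (neg a)) (add (neg b) b))) := by rw [mv _ (Ec a)]
        _ = add a (add (add a (neg a)) (add b (add (neg b) b))) := by rw [mv _ (Ec a)]
        _ = add a (add (add a (neg a)) (add (add b (neg b)) b)) := by rw [grp]
        _ = add a (add (add a (neg a)) b) := by rw [inv1]
        _ = add a b := by rw [← assoc, EaR]
    · -- ((-b + -a) + (a+b)) + (-b + -a) = -b + -a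
      calc add (add (add (neg b) (neg a)) (add a b)) (add (neg b) (neg a))
          = add (neg b) (add (neg a) (add a (add b (add (neg b) (neg a))))) := by
            simp only [assoc]
        _ = add (neg b) (add (add a (neg a)) (add b (add (neg b) (neg a)))) := by rw [sandw]
        _ = add (neg b) (add (add a (neg a)) (add (add b (neg b)) (neg a))) := by rw [grp]
        _ = add (neg b) (add (add b (neg b)) (add (add a (neg a)) (neg a))) := by
            rw [mv (add b (neg b)) (Ec b)]
        _ = add (neg b) (add (add b (neg b)) (neg a)) := by rw [EnL]
        _ = add (add (neg b) (add b (neg b))) (neg a) := by rw [← assoc]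
        _ = add (neg b) (neg a) := by rw [EnR]
  -- Rota-Baxter consequences
  have RAB : ∀ a b, add (R a) (R b) = R (mul a b) := by
    intro a b; rw [hmul]; exact hRB1 a b
  have RB2' : ∀ a, add a (add (R a) (neg (R a))) = a := by
    intro a; rw [← assoc]; exact hRB2 a
  have Ridem : ∀ f, add f f = f → add (R f) (R f) = R f := by
    intro f hf
    have hc := central f hf
    have key : add (add (add f (R f)) f) (neg (R f)) = f := by
      calc add (add (add f (R f)) f) (neg (R f))
          = add f (add (R f) (add f (neg (R f)))) := by simp only [assoc]
        _ = add f (add (R f) (add (neg (R f)) f)) := by rw [hc (neg (R f))]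
        _ = add f (add (add (R f) (neg (R f))) f) := by rw [grp (R f)]
        _ = add f (add f (add (R f) (neg (R f)))) := by rw [Ec (R f) f]
        _ = add (add f f) (add (R f) (neg (R f))) := by rw [← assoc]
        _ = add f (add (R f) (neg (R f))) := by rw [hf]
        _ = f := RB2' f
    have h2 := hRB1 f f
    rw [key] at h2
    exact h2
  have absR : ∀ x, neg (R x) = R x → add (R x) (R x) = R x → add x (R x) = x := by
    intro x h1 h2
    have h := hRB2 x
    rw [h1, assoc, h2] at h
    exact h
  have part1 : ∀ a b c, mul (mul a b) c = mul a (mul b c) := by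
    intro a b c
    rw [hmul (mul a b) c, ← RAB a b, hmul a (mul b c), hmul a b, hmul b c,
      negadd (R a) (R b)]
    simp only [assoc]
    rw [sandw (R a), mv _ (Ec (R a)) b, mv _ (Ec (R a)) (R a),
      abs a _ (RB2' a)]
  have mulaia : ∀ a, mul a (i a) =
      add (add a (neg a)) (add (R a) (neg (R a))) := by
    intro a
    rw [hmul, hi]
    simp only [assoc]
    rw [grp (R a), mv _ (Ec (R a)) a, grp a, mv _ (Ec a) (add (R a) (neg (R a))),
      Eidem (R a)]
  have part2 : ∀ a, mul (mul a (i a)) a = a := by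
    intro a
    rw [mulaia a]
    set F := add (add a (neg a)) (add (R a) (neg (R a))) with hF
    have hFi : add F F = F := by
      rw [hF, assoc, mv _ (Ec a) (add (R a) (neg (R a))), Eidem (R a), ← assoc,
        Eidem a]
    have hsi : add (R F) (R F) = R F := Ridem F hFi
    have hsc := central _ hsi
    have hsn : neg (R F) = R F := negidem _ hsi
    have hFs : add F (R F) = F := absR F hsn hsi
    rw [hmul, hsn, hFs, assoc, ← hsc a, ← assoc, hFs, hF, assoc, Ec (R a) a,
      RB2' a]
    exact inv1 a
  have key3 : ∀ a u v c, c = add (add (neg u) (neg a)) u →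
      add c (add v (neg v)) = c →
      add (add (add (add (add (add c v) a) (neg v)) (add v u)) c)
        (add (neg u) (neg v)) = c := by
    intro a u v c hc hcv
    rw [hc] at hcv
    simp only [assoc] at hcv
    calc add (add (add (add (add (add c v) a) (neg v)) (add v u)) c)
          (add (neg u) (neg v))
        = (add c (add v (add a (add (neg v) (add v (add u (add c (add (neg u) (neg v))))))))) := by simp only [assoc]
      _ = (add (neg u) (add (neg a) (add u (add v (add a (add (neg v) (add v (add u (add (neg u) (add (neg a) (add u (add (neg u) (neg v))))))))))))) := by rw [hc]; simp only [assoc]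
      _ = (add (neg u) (add (neg a) (add u (add v (add a (add (add v (neg v)) (add u (add (neg u) (add (neg a) (add u (add (neg u) (neg v)))))))))))) := by rw [sandw v]
      _ = (add (neg u) (add (neg a) (add u (add v (add a (add (add v (neg v)) (add (add u (neg u)) (add (neg a) (add u (add (neg u) (neg v))))))))))) := by rw [grp u]
      _ = (add (neg u) (add (neg a) (add u (add v (add a (add (add v (neg v)) (add (add u (neg u)) (add (neg a) (add (add u (neg u)) (neg v)))))))))) := by rw [grp u]
      _ = (add (neg u) (add (neg a) (add u (add v (add a (add (add v (neg v)) (add (add u (neg u)) (add (add u (neg u)) (add (neg a) (neg v)))))))))) := by rw [mv _ (Ec u) (neg a) (neg v)]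
      _ = (add (neg u) (add (neg a) (add u (add v (add a (add (add v (neg v)) (add (add u (neg u)) (add (neg a) (neg v))))))))) := by rw [abs _ _ (Eidem u) (add (neg a) (neg v))]
      _ = (add (neg u) (add (neg a) (add u (add v (add (add v (neg v)) (add a (add (add u (neg u)) (add (neg a) (neg v))))))))) := by rw [mv _ (Ec v) a]
      _ = (add (neg u) (add (neg a) (add u (add v (add (add v (neg v)) (add (add u (neg u)) (add a (add (neg a) (neg v))))))))) := by rw [mv _ (Ec u) a]
      _ = (add (neg u) (add (neg a) (add u (add v (add (add v (neg v)) (add (add u (neg u)) (add (add a (neg a)) (neg v)))))))) := by rw [grp a]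
      _ = (add (neg u) (add (neg a) (add u (add v (add (add u (neg u)) (add (add a (neg a)) (neg v))))))) := by rw [abs v _ (EaR v)]
      _ = (add (neg u) (add (neg a) (add u (add (add u (neg u)) (add v (add (add a (neg a)) (neg v))))))) := by rw [mv _ (Ec u) v]
      _ = (add (neg u) (add (neg a) (add u (add v (add (add a (neg a)) (neg v)))))) := by rw [abs u _ (EaR u)]
      _ = (add (neg u) (add (neg a) (add u (add (add a (neg a)) (add v (neg v)))))) := by rw [mv _ (Ec a) v (neg v)]
      _ = (add (neg u) (add (neg a) (add (add a (neg a)) (add u (add v (neg v)))))) := by rw [mv _ (Ec a) u]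
      _ = (add (neg u) (add (add a (neg a)) (add (neg a) (add u (add v (neg v)))))) := by rw [mv _ (Ec a) (neg a)]
      _ = (add (add a (neg a)) (add (neg u) (add (neg a) (add u (add v (neg v)))))) := by rw [mv _ (Ec a) (neg u)]
      _ = (add (add a (neg a)) (add (neg u) (add (neg a) u))) := by rw [hcv]
      _ = (add (neg u) (add (add a (neg a)) (add (neg a) u))) := by rw [← mv _ (Ec a) (neg u)]
      _ = (add (neg u) (add (neg a) (add (add a (neg a)) u))) := by rw [← mv _ (Ec a) (neg a)]
      _ = (add (neg u) (add (neg a) u)) := by rw [abs (neg a) _ (EnR a) u]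
      _ = c := by rw [hc]; simp only [assoc]
  have part3 : ∀ a, mul (mul (i a) a) (i a) = i a := by
    intro a
    rw [hmul (mul (i a) a) (i a), ← RAB (i a) a, hmul (i a) a, negadd, hi]
    exact key3 a (R a) (R (add (add (neg (R a)) (neg a)) (R a))) _ rfl (RB2' _)
  have part6 : ∀ e, mul e e = e → ∀ x, mul e x = mul x e := by
    intro e he
    have hw : add (R e) (R e) = R e := by
      have h := RAB e e
      rw [he] at h
      exact h
    have hwn : neg (R e) = R e := negidem _ hw
    have hwc := central _ hw
    have hew : add e (R e) = e := absR e hwn hw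
    have hee : add e e = e := by
      have h := he
      rw [hmul, hwn, hew, assoc, hew] at h
      exact h
    have hec := central e hee
    intro x
    have h1 : mul e x = add x e := by
      rw [hmul, hwn, hew, assoc, ← hwc x, ← assoc, hew, hec x]
    have h2 : mul x e = add x e := by
      rw [hmul]
      simp only [assoc]
      rw [hec (neg (R x)), grp (R x), Ec (R x) e, mv e hec x _, RB2' x, hec x]
    rw [h1, h2]
  have cidem : ∀ p q, add p p = p → add q q = q → (∀ x, add p x = add x p) →
      (∀ x, add q x = add x q) →
      add (add p q) (add p q) = add p q ∧
        (∀ x, add (add p q) x = add x (add p q)) := by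
    intro p q hp hq hpc hqc
    constructor
    · rw [assoc, mv p hpc q q, ← assoc, hp, hq]
    · intro x
      rw [assoc, hqc x, ← assoc, hpc x, assoc]
  have part5 : ∀ a, mul a (i a) = mul (i a) a := by
    intro a
    have hq : i a = add (add (neg (R a)) (neg a)) (R a) := hi a
    set q := add (add (neg (R a)) (neg a)) (R a) with hqdef
    rw [hq]
    have p2 : mul (mul a q) a = a := by rw [← hq]; exact part2 a
    have p3 : mul (mul q a) q = q := by rw [← hq]; exact part3 a
    have hL : mul a q = add (add a (neg a)) (add (R a) (neg (R a))) := by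
      rw [← hq]; exact mulaia a
    have hFF : mul (mul a q) (mul a q) = mul a q := by rw [← part1, p2]
    have hff : mul (mul q a) (mul q a) = mul q a := by rw [← part1, p3]
    have haf : mul a (mul q a) = a := by rw [← part1, p2]
    have hss : add (add (R a) (R q)) (add (R a) (R q)) = add (R a) (R q) := by
      rw [RAB a q, RAB (mul a q) (mul a q), hFF]
    have htt : add (add (R q) (R a)) (add (R q) (R a)) = add (R q) (R a) := by
      rw [RAB q a, RAB (mul q a) (mul q a), hff]
    have hsn : neg (add (R a) (R q)) = add (R a) (R q) := negidem _ hss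
    have hsc := central _ hss
    have htn : neg (add (R q) (R a)) = add (R q) (R a) := negidem _ htt
    have htc := central _ htt
    have hR : mul q a = add (add a (neg a))
        (add (add (R a) (R q)) (add (R q) (R a))) := by
      calc mul q a
          = add q (add (R q) (add a (neg (R q)))) := by rw [hmul]; simp only [assoc]
        _ = add (neg (R a)) (add (neg a) (add (R a) (add (R q) (add a (neg (R q))))))
            := by rw [hqdef]; simp only [assoc]
        _ = add (neg (R a)) (add (neg a) (add (add (R a) (R q)) (add a (neg (R q)))))
            := by rw [← assoc (R a) (R q)]
        _ = add (neg (R a)) (add (neg a) (add a (add (add (R a) (R q)) (neg (R q)))))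
            := by rw [← mv _ hsc a (neg (R q))]
        _ = add (neg (R a)) (add (add a (neg a)) (add (add (R a) (R q)) (neg (R q))))
            := by rw [sandw a]
        _ = add (add a (neg a)) (add (neg (R a)) (add (add (R a) (R q)) (neg (R q))))
            := by rw [mv _ (Ec a) (neg (R a))]
        _ = add (add a (neg a)) (add (add (R a) (R q)) (add (neg (R a)) (neg (R q))))
            := by rw [mv _ hsc (neg (R a))]
        _ = add (add a (neg a)) (add (add (R a) (R q)) (neg (add (R q) (R a))))
            := by rw [← negadd]
        _ = add (add a (neg a)) (add (add (R a) (R q)) (add (R q) (R a)))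
            := by rw [htn]
    obtain ⟨hfi, hfc⟩ := cidem (add a (neg a)) (add (add (R a) (R q)) (add (R q) (R a)))
      (Eidem a) (cidem _ _ hss htt hsc htc).1 (Ec a) (cidem _ _ hss htt hsc htc).2
    have hsE : add (add (R a) (R q)) (add (R a) (neg (R a))) = add (R a) (R q) := by
      rw [assoc, ← Ec (R a) (R q), ← assoc (R a), EaR (R a)]
    have hfE : add (add (add a (neg a)) (add (add (R a) (R q)) (add (R q) (R a))))
        (add a (neg a))
        = add (add a (neg a)) (add (add (R a) (R q)) (add (R q) (R a))) := by
      rw [hfc, ← assoc, Eidem a]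
    have hfER : add (add (add a (neg a)) (add (add (R a) (R q)) (add (R q) (R a))))
        (add (R a) (neg (R a)))
        = add (add a (neg a)) (add (add (R a) (R q)) (add (R q) (R a))) := by
      rw [assoc, assoc (add (R a) (R q)), ← Ec (R a) (add (R q) (R a)),
        ← assoc (add (R a) (R q)), hsE]
    have hSS : add (R (mul a q)) (R (mul a q)) = R (mul a q) := by
      rw [← RAB a q]; exact hss
    have hSn : neg (R (mul a q)) = R (mul a q) := negidem _ hSS
    have hFs0 : add (mul a q) (R (mul a q)) = mul a q := absR _ hSn hSS
    have hFs : add (add (add a (neg a)) (add (R a) (neg (R a)))) (add (R a) (R q))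
        = add (add a (neg a)) (add (R a) (neg (R a))) := by
      rw [RAB a q, ← hL]; exact hFs0
    have hstar : add (add a (add (add a (neg a)) (add (add (R a) (R q)) (add (R q) (R a)))))
        (add (R a) (neg (R a))) = a := by
      have h := haf
      rw [hmul a (mul q a), hR] at h
      rw [assoc, assoc, hfc (neg (R a)), ← assoc (R a),
        Ec (R a) (add (add a (neg a)) (add (add (R a) (R q)) (add (R q) (R a)))),
        ← assoc a] at h
      exact h
    have haf2 : add a (add (add a (neg a)) (add (add (R a) (R q)) (add (R q) (R a))))
        = a := by
      set f := add (add a (neg a)) (add (add (R a) (R q)) (add (R q) (R a))) with hfd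
      calc add a f
          = add (add (add a f) (add (R a) (neg (R a)))) f := by rw [hstar]
        _ = add (add a f) (add (add (R a) (neg (R a))) f) := assoc _ _ _
        _ = add (add a f) (add f (add (R a) (neg (R a)))) := by
            rw [Ec (R a) f]
        _ = add (add (add a f) f) (add (R a) (neg (R a))) := by rw [← assoc]
        _ = add (add a (add f f)) (add (R a) (neg (R a))) := by rw [assoc a]
        _ = add (add a f) (add (R a) (neg (R a))) := by rw [hfi]
        _ = a := hstar
    have hEaf : add (add a (neg a))
        (add (add a (neg a)) (add (add (R a) (R q)) (add (R q) (R a))))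
        = add a (neg a) := by
      set f := add (add a (neg a)) (add (add (R a) (R q)) (add (R q) (R a))) with hfd
      calc add (add a (neg a)) f
          = add a (add (neg a) f) := assoc _ _ _
        _ = add a (add f (neg a)) := by rw [← hfc (neg a)]
        _ = add (add a f) (neg a) := by rw [← assoc]
        _ = add a (neg a) := by rw [haf2]
    have hFf : add (add (add a (neg a)) (add (R a) (neg (R a))))
        (add (add a (neg a)) (add (add (R a) (R q)) (add (R q) (R a))))
        = add (add a (neg a)) (add (R a) (neg (R a))) := by
      set f := add (add a (neg a)) (add (add (R a) (R q)) (add (R q) (R a))) with hfd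
      calc add (add (add a (neg a)) (add (R a) (neg (R a)))) f
          = add (add a (neg a)) (add (add (R a) (neg (R a))) f) := assoc _ _ _
        _ = add (add a (neg a)) (add f (add (R a) (neg (R a)))) := by
            rw [Ec (R a) f]
        _ = add (add (add a (neg a)) f) (add (R a) (neg (R a))) := by rw [← assoc]
        _ = add (add a (neg a)) (add (R a) (neg (R a))) := by rw [hEaf]
    have hfF : add (add (add a (neg a)) (add (add (R a) (R q)) (add (R q) (R a))))
        (add (add a (neg a)) (add (R a) (neg (R a))))
        = add (add a (neg a)) (add (add (R a) (R q)) (add (R q) (R a))) := by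
      rw [← assoc, hfE, hfER]
    have hkey : add (add a (neg a)) (add (add (R a) (R q)) (add (R q) (R a)))
        = add (add a (neg a)) (add (R a) (neg (R a))) := by
      rw [← hfF, hfc]
      exact hFf
    rw [hL, hR]
    exact hkey.symm
  have part4 : ∀ a b, mul (mul a b) a = a → mul (mul b a) b = b → b = i a := by
    intro a b hb1 hb2
    have hgg : mul (mul a b) (mul a b) = mul a b := by rw [← part1, hb1]
    have hkk : mul (mul b a) (mul b a) = mul b a := by rw [← part1, hb2]
    have E1 : mul (i a) a = mul (mul (i a) (mul a b)) a := by rw [part1, hb1]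
    have E2 : mul (mul (i a) a) (i a)
        = mul (mul (i a) (mul a b)) (mul a (i a)) := by
      rw [E1, part1 (mul (i a) (mul a b)) a (i a)]
    have E3 : mul (mul a b) (mul a (i a)) = mul (mul a (i a)) (mul a b) :=
      part6 (mul a b) hgg (mul a (i a))
    have E4 : i a = mul (i a) (mul a b) := by
      calc i a = mul (mul (i a) a) (i a) := (part3 a).symm
        _ = mul (mul (i a) (mul a b)) (mul a (i a)) := E2
        _ = mul (i a) (mul (mul a b) (mul a (i a))) := part1 _ _ _
        _ = mul (i a) (mul (mul a (i a)) (mul a b)) := by rw [E3]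
        _ = mul (mul (i a) (mul a (i a))) (mul a b) := (part1 _ _ _).symm
        _ = mul (mul (mul (i a) a) (i a)) (mul a b) := by
            rw [← part1 (i a) a (i a)]
        _ = mul (i a) (mul a b) := by rw [part3]
    have E5 : mul (mul (i a) a) b = i a := by rw [part1, ← E4]
    have F1 : mul b a = mul (mul b (mul a (i a))) a := by rw [part1, part2]
    have F2 : mul (mul b a) b = mul (mul b (mul a (i a))) (mul a b) := by
      rw [F1, part1 (mul b (mul a (i a))) a b]
    have F4 : b = mul b (mul a (i a)) := by
      calc b = mul (mul b a) b := hb2.symm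
        _ = mul (mul b (mul a (i a))) (mul a b) := F2
        _ = mul b (mul (mul a (i a)) (mul a b)) := part1 _ _ _
        _ = mul b (mul (mul a b) (mul a (i a))) := by rw [← E3]
        _ = mul (mul b (mul a b)) (mul a (i a)) := (part1 _ _ _).symm
        _ = mul (mul (mul b a) b) (mul a (i a)) := by rw [← part1 b a b]
        _ = mul b (mul a (i a)) := by rw [hb2]
    calc b = mul b (mul a (i a)) := F4
      _ = mul (mul b a) (i a) := (part1 _ _ _).symm
      _ = mul (mul b a) (mul (mul (i a) a) b) := by rw [E5]
      _ = mul (mul (mul b a) (mul (i a) a)) b := (part1 _ _ _).symm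
      _ = mul (mul (mul (i a) a) (mul b a)) b := by
          rw [part6 (mul b a) hkk (mul (i a) a)]
      _ = mul (mul (i a) a) (mul (mul b a) b) := part1 _ _ _
      _ = mul (mul (i a) a) b := by rw [hb2]
      _ = i a := E5
  exact ⟨part1, part2, part3, part4, part5, part6⟩
end

section
/- Let 𝔯 be a Rota–Baxter operator on a Clifford semigroup (S,+) and define a ∘ b = a + 𝔯(a) + b - 𝔯(a). Then (S, +, ∘) is a dual weak brace: both (S,+) and (S,∘) are Clifford semigroups and the identities a∘(b+c) = a∘b - a + a∘c and a∘a⁻ = -a + a hold for all a,b,c ∈ S. -/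
theorem stmt14 {S : Type*}
    (add : S → S → S) (neg : S → S)
    (assoc : ∀ a b c, add (add a b) c = add a (add b c))
    (inv1 : ∀ a, add (add a (neg a)) a = a)
    (inv2 : ∀ a, add (add (neg a) a) (neg a) = neg a)
    (inv_unique : ∀ a b, add (add a b) a = a → add (add b a) b = b → b = neg a)
    (comm0 : ∀ a, add a (neg a) = add (neg a) a)
    (central : ∀ e, add e e = e → ∀ x, add e x = add x e)
    (R : S → S)
    (hRB1 : ∀ a b, add (R a) (R b) = R (add (add (add a (R a)) b) (neg (R a))))
    (hRB2 : ∀ a, add (add a (R a)) (neg (R a)) = a)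
    (mul : S → S → S) (i : S → S)
    (hmul : ∀ a b, mul a b = add (add (add a (R a)) b) (neg (R a)))
    (hi : ∀ a, i a = add (add (neg (R a)) (neg a)) (R a))
    : (∀ a b c, mul (mul a b) c = mul a (mul b c)) ∧
      (∀ a, mul (mul a (i a)) a = a) ∧
      (∀ a, mul (mul (i a) a) (i a) = i a) ∧
      (∀ a b, mul (mul a b) a = a → mul (mul b a) b = b → b = i a) ∧
      (∀ a, mul a (i a) = mul (i a) a) ∧
      (∀ e, mul e e = e → ∀ x, mul e x = mul x e) ∧
      (∀ a b c, mul a (add b c) = add (add (mul a b) (neg a)) (mul a c)) ∧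
      (∀ a, mul a (i a) = add (neg a) a) := by
  letI : Add S := ⟨add⟩
  letI : Neg S := ⟨neg⟩
  have A : ∀ a b c : S, a + b + c = a + (b + c) := assoc
  have I1 : ∀ a : S, a + -a + a = a := inv1
  have I2 : ∀ a : S, -a + a + -a = -a := inv2
  have U : ∀ a b : S, a + b + a = a → b + a + b = b → b = -a := inv_unique
  have C0 : ∀ a : S, a + -a = -a + a := comm0
  have CEN : ∀ e : S, e + e = e → ∀ x, e + x = x + e := central
  have RB1 : ∀ a b : S, R a + R b = R (a + R a + b + -(R a)) := hRB1
  have RB2 : ∀ a : S, a + R a + -(R a) = a := hRB2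
  have M : ∀ a b : S, mul a b = a + R a + b + -(R a) := hmul
  have IA : ∀ a : S, i a = -(R a) + -a + R a := hi
  -- basic Clifford lemmas
  have NN : ∀ a : S, -(-a) = a := fun a => (U (-a) a (I2 a) (I1 a)).symm
  have ABS1 : ∀ x : S, x + (-x + x) = x := fun x => by rw [← A]; exact I1 x
  have ABS2 : ∀ x : S, -x + (x + -x) = -x := fun x => by rw [← A]; exact I2 x
  have EI : ∀ a : S, (a + -a) + (a + -a) = a + -a := fun a => by rw [← A, I1]
  have EC : ∀ a x : S, (a + -a) + x = x + (a + -a) := fun a => CEN _ (EI a)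
  have EC2 : ∀ a x : S, (-a + a) + x = x + (-a + a) := fun a x => by
    have h := EC (-a) x; rwa [NN a] at h
  have EI2 : ∀ a : S, (-a + a) + (-a + a) = -a + a := fun a => by
    have h := EI a; rwa [C0 a] at h
  have ECl : ∀ α x y : S, (α + -α) + (x + y) = x + ((α + -α) + y) := fun α x y => by
    rw [← A, EC α x, A]
  have ECl2 : ∀ a x y : S, (-a + a) + (x + y) = x + ((-a + a) + y) := fun a x y => by
    rw [← A, EC2 a x, A]
  have NI : ∀ e : S, e + e = e → -e = e := fun e he =>
    (U e e (by rw [he, he]) (by rw [he, he])).symm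
  have EabsA : ∀ a : S, (-a + a) + a = a := fun a => by rw [← C0 a]; exact I1 a
  have NAdd : ∀ a b : S, -(a + b) = -b + -a := by
    intro a b
    have p : (a + b) + (-b + -a) + (a + b) = a + b := by
      simp only [A]
      rw [← A (-a) a b, EC2 a b, ← A (-b) b (-a + a), EC2 b (-a + a),
        ← ECl2 a b (-b + b), ABS1 b, ← A a (-a + a) b, ABS1 a]
    have q : (-b + -a) + (a + b) + (-b + -a) = -b + -a := by
      simp only [A]
      rw [← A (-a) a (b + (-b + -a)), ECl2 a b (-b + -a), ECl2 a (-b) (-a), I2 a,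
        ← A b (-b) (-a), ← A (-b) (b + -b) (-a), ABS2 b]
    exact (U (a + b) (-b + -a) p q).symm
  -- Rota-Baxter basic consequences
  have K1 : ∀ a : S, a + (R a + -(R a)) = a := fun a => by
    rw [← A a (R a) (-(R a))]; exact RB2 a
  have K2 : ∀ a : S, (-a + a) + (R a + -(R a)) = -a + a := by
    intro a
    have h : -a + (a + (R a + -(R a))) = -a + a := by rw [K1 a]
    rw [← A (-a) a (R a + -(R a))] at h
    exact h
  have K2' : ∀ a : S, (a + -a) + (R a + -(R a)) = a + -a := fun a => by
    rw [C0 a]; exact K2 a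
  have K2v : ∀ a : S, (-a + a) + (-(R a) + R a) = -a + a := fun a => by
    have h := K2 a; rwa [C0 (R a)] at h
  -- R of the idempotent -a + a
  have REI : ∀ a : S, R (-a + a) + R (-a + a) = R (-a + a) := by
    intro a
    have harg : (-a + a) + R (-a + a) + (-a + a) + -(R (-a + a)) = -a + a := by
      rw [A (-a + a) (R (-a + a)) (-a + a), ← EC2 a (R (-a + a)),
        ← A (-a + a) (-a + a) (R (-a + a)), EI2 a]
      exact RB2 (-a + a)
    have h := RB1 (-a + a) (-a + a)
    rw [harg] at h
    exact h
  have RENeg : ∀ a : S, -(R (-a + a)) = R (-a + a) := fun a => NI _ (REI a)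
  have REC : ∀ a x : S, R (-a + a) + x = x + R (-a + a) := fun a => CEN _ (REI a)
  have RECl : ∀ a x y : S, R (-a + a) + (x + y) = x + (R (-a + a) + y) := fun a x y => by
    rw [← A, REC a x, A]
  have KR : ∀ a : S, R a + R (-a + a) = R a := by
    intro a
    have harg : a + R a + (-a + a) + -(R a) = a := by
      rw [A a (R a) (-a + a), ← EC2 a (R a), ← A a (-a + a) (R a), ABS1 a]
      exact RB2 a
    have h := RB1 a (-a + a)
    rw [harg] at h
    exact h
  have aRE : ∀ a : S, a + R (-a + a) = a := by
    intro a
    nth_rewrite 1 [← RB2 a]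
    rw [A (a + R a) (-(R a)) (R (-a + a)), ← REC a (-(R a)),
      ← A (a + R a) (R (-a + a)) (-(R a)), A a (R a) (R (-a + a)), KR a]
    exact RB2 a
  have aRE' : ∀ a : S, -a + R (-a + a) = -a := by
    intro a
    have h : -(a + R (-a + a)) = -a := by rw [aRE a]
    rw [NAdd a (R (-a + a)), RENeg a] at h
    rw [REC a (-a)] at h
    exact h
  -- a ∘ (i a) = -a + a
  have AI : ∀ a : S, mul a (i a) = -a + a := by
    intro a
    rw [M a (i a), IA a]
    simp only [A]
    rw [← A (R a) (-(R a)) (-a + (R a + -(R a))), ECl (R a) (-a) (R a + -(R a)),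
      EI (R a), ← A a (-a) (R a + -(R a)), K2' a, C0 a]
  -- the map i gives ∘-inverses
  have RIA : ∀ a : S, R a + R (i a) = R (-a + a) := by
    intro a
    have harg2 : a + R a + i a + -(R a) = -a + a := by
      rw [← M a (i a)]; exact AI a
    have h := RB1 a (i a)
    rw [harg2] at h
    exact h
  have NIA : ∀ a : S, -(i a) = -(R a) + (a + R a) := by
    intro a
    rw [IA a, NAdd, NAdd, NN, NN]
  have EIA : ∀ a : S, i a + -(i a) = -a + a := by
    intro a
    rw [NIA a, IA a]
    simp only [A]
    rw [← A (R a) (-(R a)) (a + R a), ECl (R a) a (R a), I1 (R a),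
      ← A (-a) a (R a), EC2 a (R a), ← A (-(R a)) (R a) (-a + a),
      EC2 (R a) (-a + a), K2v a]
  have EaEX : ∀ a : S, (-a + a) + (R (i a) + -(R (i a))) = -a + a := by
    intro a
    have h := K1 (i a)
    have h2 : -(i a) + (i a + (R (i a) + -(R (i a)))) = -(i a) + i a := by rw [h]
    rw [← A (-(i a)) (i a) (R (i a) + -(R (i a)))] at h2
    have h3 : -(i a) + i a = -a + a := by
      rw [← C0 (i a)]; exact EIA a
    rw [h3] at h2
    exact h2
  have IAI : ∀ a : S, mul (i a) a = -a + a := by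
    intro a
    rw [M (i a) a]
    nth_rewrite 1 [IA a]
    simp only [A]
    rw [← A (R a) (R (i a)) (a + -(R (i a))), RIA a, RECl a a (-(R (i a))),
      ← RIA a, A (R a) (R (i a)) (-(R (i a))),
      ← A (-a) a (R a + (R (i a) + -(R (i a)))), ECl2 a (R a) (R (i a) + -(R (i a))),
      EaEX a, ← A (-(R a)) (R a) (-a + a), EC2 (R a) (-a + a), K2v a]
  have G5 : ∀ a : S, mul a (i a) = mul (i a) a := fun a => (AI a).trans (IAI a).symm
  -- absorption lemmas for -a + a and R(-a+a) with i a
  have iaRE : ∀ a : S, i a + R (-a + a) = i a := by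
    intro a
    rw [IA a]
    rw [A (-(R a) + -a) (R a) (R (-a + a)), ← REC a (R a),
      ← A (-(R a) + -a) (R (-a + a)) (R a), A (-(R a)) (-a) (R (-a + a)), aRE' a]
  have EIa : ∀ a : S, (-a + a) + i a = i a := by
    intro a
    rw [IA a]
    rw [← A (-a + a) (-(R a) + -a) (R a), ← A (-a + a) (-(R a)) (-a),
      EC2 a (-(R a)), A (-(R a)) (-a + a) (-a), I2 a]
  -- Goal 2
  have P2 : ∀ a : S, mul (mul a (i a)) a = a := by
    intro a
    rw [AI a, M (-a + a) a, RENeg a,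
      A ((-a + a) + R (-a + a)) a (R (-a + a)), aRE a,
      A (-a + a) (R (-a + a)) a, REC a a, aRE a, EabsA a]
  -- Goal 3
  have P3 : ∀ a : S, mul (mul (i a) a) (i a) = i a := by
    intro a
    rw [IAI a, M (-a + a) (i a), RENeg a,
      A ((-a + a) + R (-a + a)) (i a) (R (-a + a)), iaRE a,
      A (-a + a) (R (-a + a)) (i a), REC a (i a), iaRE a, EIa a]
  -- Goal 1 : associativity of mul
  have MA : ∀ a b c : S, mul (mul a b) c = mul a (mul b c) := by
    intro a b c
    simp only [M]
    rw [← RB1 a b, NAdd (R a) (R b)]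
    simp only [A]
    rw [← A (-(R a)) (R a) (R b + (c + (-(R b) + -(R a)))),
      ECl2 (R a) (R b) (c + (-(R b) + -(R a))),
      ECl2 (R a) c (-(R b) + -(R a)),
      ECl2 (R a) (-(R b)) (-(R a)), I2 (R a)]
  -- Goal 6 : idempotents of mul are central
  have CENM : ∀ e : S, mul e e = e → ∀ x, mul e x = mul x e := by
    intro e he x
    have hRe : R e + R e = R e := by
      have h := RB1 e e
      rw [← M e e, he] at h
      exact h
    have hnRe : -(R e) = R e := NI _ hRe
    have hReC : ∀ y : S, R e + y = y + R e := CEN _ hRe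
    have hdiamond : (e + e) + R e = e := by
      have h := he
      rw [M e e, hnRe, A e (R e) e, hReC e, ← A e e (R e),
        A (e + e) (R e) (R e), hRe] at h
      exact h
    have heRe : e + R e = e := by
      nth_rewrite 1 [← hdiamond]
      rw [A (e + e) (R e) (R e), hRe]
      exact hdiamond
    have hee : e + e = e := by
      have h := hdiamond
      rw [A e e (R e), heRe] at h
      exact h
    have heC : ∀ y : S, e + y = y + e := CEN e hee
    have h1 : mul e x = x + e := by
      rw [M e x, hnRe, heRe, heC x, A x e (R e), heRe]
    have h2 : mul x e = x + e := by
      rw [M x e, A (x + R x) e (-(R x)), heC (-(R x)), ← A (x + R x) (-(R x)) e, RB2 x]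
    rw [h1, h2]
  -- Goal 4 : uniqueness of inverses in (S, mul)
  have G4 : ∀ a b : S, mul (mul a b) a = a → mul (mul b a) b = b → b = i a := by
    intro a b hab hba
    have eaia : mul (mul a (i a)) (mul a (i a)) = mul a (i a) := by
      rw [← MA (mul a (i a)) a (i a), P2 a]
    have caia := CENM _ eaia
    have eba : mul (mul b a) (mul b a) = mul b a := by
      rw [← MA (mul b a) b a, hba]
    have cba := CENM _ eba
    have h1 : mul b (mul a (i a)) = b := by
      have h : mul (mul b (mul (mul a (i a)) a)) b = b := by rw [P2 a]; exact hba
      rw [MA b (mul (mul a (i a)) a) b, MA (mul a (i a)) a b, caia (mul a b),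
        ← MA b (mul a b) (mul a (i a)), ← MA b a b, hba] at h
      exact h
    have E1' : mul (mul b a) (i a) = b := by
      rw [MA b a (i a)]; exact h1
    have h2 : mul (i a) (mul a b) = i a := by
      have h : mul (mul (i a) (mul (mul a b) a)) (i a) = i a := by rw [hab]; exact P3 a
      rw [MA (i a) (mul (mul a b) a) (i a), MA (mul a b) a (i a),
        ← caia (mul a b), ← MA (i a) (mul a (i a)) (mul a b),
        ← MA (i a) a (i a), P3 a] at h
      exact h
    have h3 : mul (mul b a) (i a) = i a := by
      conv_lhs => rw [← P3 a]
      rw [← MA (mul b a) (mul (i a) a) (i a), cba (mul (i a) a),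
        MA (mul (i a) a) (mul b a) (i a), E1', MA (i a) a b]
      exact h2
    exact E1'.symm.trans h3
  -- Goal 7 : distributivity
  have G7 : ∀ a b c : S, mul a (b + c) = mul a b + -a + mul a c := by
    intro a b c
    rw [M a (b + c), M a b, M a c]
    simp only [A]
    rw [← A (-a) a (R a + (c + -(R a))), ECl2 a (R a) (c + -(R a)),
      ← A (-(R a)) (R a) ((-a + a) + (c + -(R a))),
      ← A (-(R a) + R a) (-a + a) (c + -(R a)),
      EC2 (R a) (-a + a), K2v a,
      ← ECl2 a b (c + -(R a)), ← ECl2 a (R a) (b + (c + -(R a))),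
      ← A a (-a + a) (R a + (b + (c + -(R a)))), ABS1 a]
  exact ⟨MA, P2, P3, G4, G5, CENM, G7, AI⟩
end

section
/- Let 𝔯 be a Rota–Baxter operator on a Clifford semigroup (S,+) and (S,∘) the induced Clifford semigroup with a ∘ b = a + 𝔯(a) + b - 𝔯(a). Then 𝔯 is a homomorphism from (S,∘) to (S,+), and moreover 𝔯 is itself a Rota–Baxter operator on the Clifford semigroup (S,∘). -/
theorem stmt15 {S : Type*}
    (add : S → S → S) (neg : S → S)
    (assoc : ∀ a b c, add (add a b) c = add a (add b c))
    (inv1 : ∀ a, add (add a (neg a)) a = a)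
    (inv2 : ∀ a, add (add (neg a) a) (neg a) = neg a)
    (inv_unique : ∀ a b, add (add a b) a = a → add (add b a) b = b → b = neg a)
    (comm0 : ∀ a, add a (neg a) = add (neg a) a)
    (central : ∀ e, add e e = e → ∀ x, add e x = add x e)
    (R : S → S)
    (hRB1 : ∀ a b, add (R a) (R b) = R (add (add (add a (R a)) b) (neg (R a))))
    (hRB2 : ∀ a, add (add a (R a)) (neg (R a)) = a)
    (mul : S → S → S) (i : S → S)
    (hmul : ∀ a b, mul a b = add (add (add a (R a)) b) (neg (R a)))
    (hi : ∀ a, i a = add (add (neg (R a)) (neg a)) (R a))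
    : (∀ a b, R (mul a b) = add (R a) (R b)) ∧
      (∀ a b, mul (R a) (R b) = R (mul (mul (mul a (R a)) b) (i (R a)))) ∧
      (∀ a, mul (mul a (R a)) (i (R a)) = a) := by
  -- basic Clifford lemmas
  have eidem : ∀ x, add (add x (neg x)) (add x (neg x)) = add x (neg x) := by
    intro x
    rw [← assoc, inv1]
  have ecomm : ∀ x y, add (add x (neg x)) y = add y (add x (neg x)) :=
    fun x y => central _ (eidem x) y
  have neg_neg : ∀ x, neg (neg x) = x :=
    fun x => (inv_unique (neg x) x (inv2 x) (inv1 x)).symm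
  have xe : ∀ x, add x (add x (neg x)) = x :=
    fun x => (ecomm x x).symm.trans (inv1 x)
  have nxe : ∀ x, add (neg x) (add x (neg x)) = neg x := by
    intro x
    rw [← assoc, inv2]
  have xex : ∀ x, add x (add (neg x) x) = x := by
    intro x
    rw [← assoc, inv1]
  have emove : ∀ x y z, add x (add (neg x) (add y z)) = add y (add x (add (neg x) z)) := by
    intro x y z
    rw [← assoc x (neg x) (add y z), ← assoc (add x (neg x)) y z, ecomm x y,
      assoc y (add x (neg x)) z, assoc x (neg x) z]
  have emove2 : ∀ x y, add x (add (neg x) y) = add y (add x (neg x)) := by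
    intro x y
    rw [← assoc x (neg x) y]
    exact ecomm x y
  have nemove : ∀ x y z, add (neg x) (add x (add y z)) = add y (add (neg x) (add x z)) := by
    intro x y z
    have h := emove (neg x) y z
    rwa [neg_neg] at h
  have nemove2 : ∀ x y, add (neg x) (add x y) = add y (add (neg x) x) := by
    intro x y
    have h := emove2 (neg x) y
    rwa [neg_neg] at h
  have cancel1 : ∀ x z, add x (add (neg x) (add x z)) = add x z := by
    intro x z
    rw [← assoc x (neg x) (add x z), ← assoc (add x (neg x)) x z, inv1]
  have cancel2 : ∀ x z, add (neg x) (add x (add (neg x) z)) = add (neg x) z := by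
    intro x z
    rw [← assoc (neg x) x (add (neg x) z), ← assoc (add (neg x) x) (neg x) z, inv2]
  have xechain : ∀ x z, add x (add x (add (neg x) z)) = add x z := by
    intro x z
    rw [← assoc x (neg x) z, ← assoc x (add x (neg x)) z, xe]
  have rb2c : ∀ a z, add a (add (R a) (add (neg (R a)) z)) = add a z := by
    intro a z
    rw [← assoc (R a) (neg (R a)) z, ← assoc a (add (R a) (neg (R a))) z, ← assoc a (R a) (neg (R a)), hRB2]
  have rb2e : ∀ a, add a (add (R a) (neg (R a))) = a := by
    intro a
    rw [← assoc, hRB2]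
  have neg_add : ∀ x y, neg (add x y) = add (neg y) (neg x) := by
    intro x y
    refine (inv_unique (add x y) (add (neg y) (neg x)) ?_ ?_).symm
    · simp only [assoc]
      rw [emove y (neg x) (add x y), emove y x y, xex, cancel1]
    · simp only [assoc]
      rw [nemove x y (add (neg y) (neg x)), nemove x (neg y) (neg x), nxe, cancel2]
  -- part 1
  have part1 : ∀ a b, R (mul a b) = add (R a) (R b) := by
    intro a b
    rw [hmul]
    exact (hRB1 a b).symm
  have mulc : ∀ a b, mul a b = add a (add (R a) (add b (neg (R a)))) := by
    intro a b
    rw [hmul, assoc, assoc]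
  -- R of an idempotent is idempotent
  have Ridem : ∀ e, add e e = e → add (R e) (R e) = R e := by
    intro e he
    rw [hRB1 e e]
    refine congrArg R ?_
    rw [assoc e (R e) e, ← central e he (R e), ← assoc e e (R e), he, hRB2]
  -- x ∘ (i x) equals the idempotent e_x + e_{Rx}
  have oix : ∀ x, mul x (i x) = add x (add (neg x) (add (R x) (neg (R x)))) := by
    intro x
    rw [mulc x (i x), hi x]
    simp only [assoc]
    rw [rb2c x (add (neg x) (add (R x) (neg (R x))))]
  -- key lemma : R (i x) = neg (R x)
  have keyL : ∀ x, R (i x) = neg (R x) := by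
    intro x
    have hEidem : add (add x (add (neg x) (add (R x) (neg (R x)))))
        (add x (add (neg x) (add (R x) (neg (R x))))) =
        add x (add (neg x) (add (R x) (neg (R x)))) := by
      simp only [assoc]
      rw [emove (R x) x (add (neg x) (add (R x) (neg (R x)))),
        emove (R x) (neg x) (add (R x) (neg (R x))), nxe (R x),
        cancel1 x (add (neg x) (add (R x) (neg (R x))))]
    have fidem := Ridem _ hEidem
    have ix_ex : add (i x) (add x (neg x)) = i x := by
      rw [hi x]
      simp only [assoc]
      rw [← ecomm x (R x), assoc x (neg x) (R x), cancel2 x (R x)]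
    have ix_er : add (i x) (add (R x) (neg (R x))) = i x := by
      rw [hi x]
      simp only [assoc]
      rw [xe (R x)]
    have h3 : add (R x) (R (add x (add (neg x) (add (R x) (neg (R x)))))) = R x := by
      rw [hRB1]
      refine congrArg R ?_
      simp only [assoc]
      rw [← emove x (R x) (add (R x) (add (neg (R x)) (neg (R x)))),
        xechain x (add (R x) (add (R x) (add (neg (R x)) (neg (R x))))),
        ← assoc (R x) (neg (R x)) (neg (R x)), ecomm (R x) (neg (R x)), nxe (R x), rb2e x]
    have h4 : add (R (i x)) (R (add x (add (neg x) (add (R x) (neg (R x)))))) = R (i x) := by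
      rw [hRB1]
      refine congrArg R ?_
      simp only [assoc]
      rw [emove x (R x) (add (neg (R x)) (neg (R (i x)))),
        emove x (neg (R x)) (neg (R (i x))),
        emove2 x (neg (R (i x))),
        emove (R x) (neg (R (i x))) (add x (neg x)),
        rb2c (i x) (add (R x) (add (neg (R x)) (add x (neg x)))),
        ← assoc (R x) (neg (R x)) (add x (neg x)),
        ← assoc (i x) (add (R x) (neg (R x))) (add x (neg x)),
        ix_er, ix_ex]
    have hpt : add (R x) (R (i x)) = R (add x (add (neg x) (add (R x) (neg (R x))))) :=
      (part1 x (i x)).symm.trans (congrArg R (oix x))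
    have hA : add (add (R x) (R (i x))) (R x) = R x := by
      rw [hpt]
      exact (central _ fidem (R x)).trans h3
    have hB : add (add (R (i x)) (R x)) (R (i x)) = R (i x) := by
      rw [assoc, hpt]
      exact h4
    exact inv_unique (R x) (R (i x)) hA hB
  refine ⟨part1, ?_, ?_⟩
  · intro a b
    rw [part1 (mul (mul a (R a)) b) (i (R a)), part1 (mul a (R a)) b, part1 a (R a),
      keyL (R a), hmul (R a) (R b)]
  · intro a
    rw [mulc (mul a (R a)) (i (R a)), part1 a (R a), mulc a (R a), hi (R a),
      neg_add (R a) (R (R a))]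
    simp only [assoc]
    rw [cancel1 (R a) (add (R (R a)) (add (neg (R (R a))) (add (neg (R a)) (add (R (R a)) (add (neg (R (R a))) (neg (R a))))))),
      emove (R (R a)) (neg (R a)) (add (R (R a)) (add (neg (R (R a))) (neg (R a)))),
      cancel1 (R (R a)) (add (neg (R (R a))) (neg (R a))),
      emove2 (R (R a)) (neg (R a)),
      emove (R a) (neg (R a)) (add (R (R a)) (neg (R (R a)))),
      cancel1 (R a) (add (neg (R a)) (add (R (R a)) (neg (R (R a))))),
      ← emove2 (R (R a)) (neg (R a)),
      rb2c (R a) (neg (R a)), rb2e a]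
end

section
/- Let (G,+) be a (not necessarily abelian) group, N a normal subgroup of G such that G/N is abelian, and 𝒮 a subgroup of G that is a set of coset representatives of G/N. Then any map 𝔯: G → G with image 𝒮 and satisfying 𝔯(g) ∈ N + g for every g ∈ G is an idempotent Rota–Baxter endomorphism of G (i.e., 𝔯 is a group endomorphism, 𝔯∘𝔯 = 𝔯, and 𝔯(g) + 𝔯(h) = 𝔯(g + 𝔯(g) + h - 𝔯(g)) for all g,h). -/
theorem stmt16 {G : Type*} [AddGroup G]
    (N : AddSubgroup G) (hN : N.Normal)
    (hab : ∀ g h : G, g + h - g - h ∈ N)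
    (𝒮 : AddSubgroup G)
    (hrep : ∀ g : G, ∃! s : G, s ∈ 𝒮 ∧ s - g ∈ N)
    (R : G → G)
    (hIm : Set.range R = (𝒮 : Set G))
    (hcos : ∀ g, R g - g ∈ N) :
    (∀ g h, R (g + h) = R g + R h) ∧
      (∀ g, R (R g) = R g) ∧
      (∀ g h, R g + R h = R (g + R g + h - R g)) := by
  haveI := hN
  have hmem : ∀ g, R g ∈ 𝒮 := fun g => by
    have : R g ∈ Set.range R := ⟨g, rfl⟩
    rwa [hIm] at this
  have key : ∀ g s, s ∈ 𝒮 → s - g ∈ N → R g = s := by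
    intro g s hs hsg
    obtain ⟨t, _, ht⟩ := hrep g
    rw [ht (R g) ⟨hmem g, hcos g⟩, ← ht s ⟨hs, hsg⟩]
  set π : G → G ⧸ N := QuotientAddGroup.mk
  have hπ : ∀ a b : G, π a = π b ↔ a - b ∈ N := fun a b =>
    QuotientAddGroup.eq_iff_sub_mem
  have hcomm : ∀ a b : G, π (a + b) = π (b + a) := by
    intro a b
    rw [hπ]
    have := hab a b
    simpa [sub_eq_add_neg, neg_add_rev, add_assoc] using this
  have hπR : ∀ g, π (R g) = π g := fun g => (hπ _ _).2 (hcos g)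
  have hπadd : ∀ a b : G, π (a + b) = π a + π b := fun a b => rfl
  have hπneg : ∀ a : G, π (-a) = -π a := fun a => rfl
  refine ⟨?_, ?_, ?_⟩
  · intro g h
    refine key _ _ (add_mem (hmem g) (hmem h)) ?_
    rw [← hπ]
    show π (R g) + π (R h) = π (g + h)
    rw [hπR, hπR]; rfl
  · intro g
    exact key _ _ (hmem g) (by simpa using N.zero_mem)
  · intro g h
    refine (key _ _ (add_mem (hmem g) (hmem h)) ?_).symm
    rw [← hπ]
    show π (R g) + π (R h) = π (g + R g + h - R g)
    have : π (g + R g + h - R g) = π g + π (R g) + π h - π (R g) := rfl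
    rw [this, hπR, hπR]
    have c : ∀ x y : G ⧸ N, x + y = y + x := by
      intro x y
      induction x using QuotientAddGroup.induction_on with
      | H a =>
        induction y using QuotientAddGroup.induction_on with
        | H b => exact hcomm a b
    rw [add_assoc, add_sub_assoc, c (π g) (π h), add_sub_cancel_right]
    exact c _ _
end

section
/- Let (G,+) be a group and 𝔯 an idempotent Rota–Baxter endomorphism of G. Then the quotient G/ker 𝔯 is abelian, the image of 𝔯 is a subgroup of G that forms a set of coset representatives of G/ker 𝔯, and 𝔯(g) ∈ ker 𝔯 + g for every g ∈ G. -/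
theorem stmt17 {G : Type*} [AddGroup G]
    (R : G → G)
    (hhom : ∀ g h, R (g + h) = R g + R h)
    (hidem : ∀ g, R (R g) = R g)
    (hRB : ∀ g h, R g + R h = R (g + R g + h - R g)) :
    (∀ g h, R (g + h - g - h) = 0) ∧
      (∀ x y : G, (∃ a, R a = x) → (∃ b, R b = y) → ∃ c, R c = x + y) ∧
      (∃ z, R z = 0) ∧
      (∀ x : G, (∃ a, R a = x) → ∃ b, R b = -x) ∧
      (∀ g : G, ∃! s : G, (∃ x, R x = s) ∧ R (s - g) = 0) ∧
      (∀ g, R (R g - g) = 0) := by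
  have h0 : R 0 = 0 := by
    have h := hhom 0 0
    simpa using h.symm
  have hneg : ∀ g, R (-g) = -(R g) := by
    intro g
    have h := hhom g (-g)
    simp [h0] at h
    exact eq_neg_of_add_eq_zero_right h.symm
  have hsub : ∀ g h, R (g - h) = R g - R h := by
    intro g h
    rw [sub_eq_add_neg, hhom, hneg, sub_eq_add_neg]
  have hcomm : ∀ g h, R g + R h = R h + R g := by
    intro g h
    have h1 := hRB g h
    rw [hsub, hhom, hhom, hidem, add_assoc, add_sub_assoc] at h1
    have h2 : R h = R g + R h - R g := add_left_cancel h1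
    calc R g + R h = R g + R h - R g + R g := by rw [sub_add_cancel]
      _ = R h + R g := by rw [← h2]
  have hker : ∀ g, R (R g - g) = 0 := by
    intro g
    rw [hsub, hidem, sub_self]
  refine ⟨?_, ?_, ⟨0, h0⟩, ?_, ?_, hker⟩
  · intro g h
    rw [hsub, hsub, hhom, hcomm g h]
    simp
  · rintro x y ⟨a, rfl⟩ ⟨b, rfl⟩
    exact ⟨a + b, hhom a b⟩
  · rintro x ⟨a, rfl⟩
    exact ⟨-a, hneg a⟩
  · intro g
    refine ⟨R g, ⟨⟨g, rfl⟩, hker g⟩, ?_⟩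
    rintro s ⟨⟨x, rfl⟩, hs⟩
    rw [hsub, hidem, sub_eq_zero] at hs
    rw [← hidem x, hs]
    exact hidem g
end

section
/- Let (S,+) be a Clifford semigroup and 𝔯 a Rota–Baxter endomorphism of (S,+) whose image is commutative. Then the dual weak brace S_𝔯 with a ∘ b = a + 𝔯(a) + b - 𝔯(a) is a bi-weak brace: for all a, b, c ∈ S one has a + (b ∘ c) = (a + b) ∘ a⁻ ∘ (a + c) and a - a = a⁻ ∘ a. -/
/-!
The idempotents `a - a` are central, so they can be moved freely and are absorbed by every
element above them, e.g. `a + (𝔯 a - 𝔯 a) = a`. Together with the commutativity of the image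
this makes `𝔯` a homomorphism `(S, ∘) → (S, +)`; hence `∘` is associative, `𝔯 a⁻ = -𝔯 a` and
`a⁻ ∘ x = -𝔯 a - a + x + 𝔯 a`. Both identities then reduce to absorbing the idempotents
`a - a` and `𝔯 a - 𝔯 a` into `a`.
-/
class IsCliffordAddSemigroup (S : Type*) [AddSemigroup S] [Neg S] : Prop where
  add_neg_add : ∀ a : S, a + -a + a = a
  neg_add_neg : ∀ a : S, -a + a + -a = -a
  eq_neg_of_add_add : ∀ a b : S, a + b + a = a → b + a + b = b → b = -a
  addCommute_of_add_self : ∀ e : S, e + e = e → ∀ x, AddCommute e x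

namespace IsCliffordAddSemigroup

variable {S : Type*} [AddSemigroup S] [Neg S] [IsCliffordAddSemigroup S]

theorem add_neg_add' (a : S) : a + (-a + a) = a := by rw [← add_assoc, add_neg_add]

theorem neg_add_neg' (a : S) : -a + (a + -a) = -a := by rw [← add_assoc, neg_add_neg]

theorem addCommute_add_neg (a x : S) : AddCommute (a + -a) x :=
  addCommute_of_add_self _ (by rw [← add_assoc, add_neg_add]) x

theorem addCommute_neg_add (a x : S) : AddCommute (-a + a) x :=
  addCommute_of_add_self _ (by rw [← add_assoc, neg_add_neg]) x

theorem neg_add_comm (a : S) : -a + a = a + -a :=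
  calc -a + a = -a + (a + -a) + a := by rw [neg_add_neg']
    _ = (a + -a) + (-a + a) := by rw [← (addCommute_add_neg a (-a)).eq, add_assoc]
    _ = (-a + a) + (a + -a) := (addCommute_add_neg a _).eq
    _ = a + (-a + a) + -a := by rw [← add_assoc, (addCommute_neg_add a a).eq]
    _ = a + -a := by rw [add_neg_add']

theorem add_add_neg_self (a : S) : a + (a + -a) = a := by rw [← neg_add_comm, add_neg_add']

theorem neg_neg (a : S) : - -a = a :=
  (eq_neg_of_add_add _ _ (neg_add_neg a) (add_neg_add a)).symm

theorem neg_add_rev (a b : S) : -(a + b) = -b + -a := by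
  refine (eq_neg_of_add_add _ _ ?_ ?_).symm
  · calc a + b + (-b + -a) + (a + b) = a + ((b + -b) + ((-a + a) + b)) := by
          simp only [add_assoc]
      _ = a + ((-a + a) + ((b + -b) + b)) := by rw [(addCommute_add_neg b _).left_comm]
      _ = a + b := by rw [← add_assoc a, add_neg_add', add_neg_add]
  · calc -b + -a + (a + b) + (-b + -a) = -b + ((-a + a) + ((b + -b) + -a)) := by
          simp only [add_assoc]
      _ = -b + ((b + -b) + ((-a + a) + -a)) := by rw [(addCommute_neg_add a _).left_comm]
      _ = -b + -a := by rw [← add_assoc (-b), neg_add_neg', neg_add_neg]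

theorem neg_add_neg_self (a : S) : -(a + -a) = a + -a := by
  rw [neg_add_rev, neg_neg]

theorem neg_add_add_neg_of_add_add_neg {a b : S} (h : a + (b + -b) = a) :
    -a + (b + -b) = -a := by
  conv_rhs => rw [← h, neg_add_rev, neg_add_neg_self, (addCommute_add_neg b _).eq]

theorem add_add_add_neg_add_of_add_add_neg {a b : S} (h : a + (b + -b) = a) (y z : S) :
    a + y + ((b + -b) + z) = a + y + z := by
  rw [← add_assoc, add_assoc a, (addCommute_add_neg b y).eq.symm, ← add_assoc, h]

theorem map_neg (R : S →ₙ+ S) (a : S) : R (-a) = -R a :=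
  eq_neg_of_add_add _ _ (by rw [← map_add, ← map_add, add_neg_add])
    (by rw [← map_add, ← map_add, neg_add_neg])

-- `circ R a b` is `a ∘ b` and `circInv R a` is `a⁻` in the dual weak brace `S_𝔯`.
def circ (R : S →ₙ+ S) (a b : S) : S := a + R a + b + -R a

def circInv (R : S →ₙ+ S) (a : S) : S := -R a + -a + R a

-- The Rota–Baxter identity `R a + R b = R (a ∘ b)` follows from these fields (`map_circ`).
structure IsCommRotaBaxter (R : S →ₙ+ S) : Prop where
  add_add_neg : ∀ a, a + R a + -R a = a
  addCommute : ∀ a b, AddCommute (R a) (R b)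

namespace IsCommRotaBaxter

variable {R : S →ₙ+ S} (hR : IsCommRotaBaxter R)
include hR

omit [IsCliffordAddSemigroup S] in
theorem add_add_neg' (a : S) : a + (R a + -R a) = a := by rw [← add_assoc, hR.add_add_neg]

theorem neg_add_add_neg (a : S) : -a + (R a + -R a) = -a :=
  neg_add_add_neg_of_add_add_neg (hR.add_add_neg' a)

theorem map_add_map_add_neg (a b : S) : R a + R b + -R a = R a + -R a + R b := by
  rw [(hR.addCommute a b).eq, add_assoc, (addCommute_add_neg (R a) _).eq]

theorem map_circ (a b : S) : R (circ R a b) = R a + R b :=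
  calc R (circ R a b) = R a + (R b + (R (R a) + -R (R a))) := by
        simp only [circ, map_add, map_neg, add_assoc, (hR.addCommute (R a) b).left_comm]
    _ = R a + R b := by
        rw [← (addCommute_add_neg (R (R a)) (R b)).eq, ← add_assoc, hR.add_add_neg']

theorem map_circInv (a : S) : R (circInv R a) = -R a := by
  have hc := hR.addCommute (-R a) (-a)
  rw [map_neg, map_neg] at hc
  simp only [circInv, map_add, map_neg]
  rw [hc.eq, add_assoc, neg_add_comm, hR.neg_add_add_neg]

theorem circ_assoc (a b c : S) : circ R (circ R a b) c = circ R a (circ R b c) :=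
  calc circ R (circ R a b) c
      = a + (R a + (b + ((-R a + R a) + (R b + (c + (-R b + -R a)))))) := by
        rw [circ, hR.map_circ, circ]; simp only [neg_add_rev, add_assoc]
    _ = a + (-R a + R a) + (R a + (b + (R b + (c + (-R b + -R a))))) := by
        rw [← (addCommute_neg_add (R a) b).left_comm,
          ← (addCommute_neg_add (R a) (R a)).left_comm, ← add_assoc a]
    _ = circ R a (circ R b c) := by
        rw [neg_add_comm (R a), hR.add_add_neg']; simp only [circ, add_assoc]

theorem circInv_circ (a b : S) : circ R (circInv R a) b = -R a + -a + b + R a := by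
  rw [circ, hR.map_circInv, neg_neg]
  simp only [circInv, add_assoc]
  rw [← add_assoc (R a), ← add_assoc (-a), hR.neg_add_add_neg]

theorem add_neg_eq_circInv_circ (a : S) : a + -a = circ R (circInv R a) a :=
  calc a + -a = a + -a + (R a + -R a) := by rw [add_assoc, hR.neg_add_add_neg]
    _ = -R a + (-a + a) + R a := by
        rw [neg_add_comm a, ← (addCommute_add_neg a _).eq, add_assoc (a + -a),
          neg_add_comm (R a)]
    _ = circ R (circInv R a) a := by rw [hR.circInv_circ, ← add_assoc (-R a) (-a) a]

theorem add_circ (a b c : S) :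
    a + circ R b c = circ R (circ R (a + b) (circInv R a)) (a + c) := by
  have hinner : -R a + -a + (a + c) + R a = (a + -a) + (-R a + c + R a) := by
    rw [← add_assoc _ a c, add_assoc (-R a) (-a) a, neg_add_comm a,
      ← (addCommute_add_neg a (-R a)).eq]
    simp only [add_assoc]
  symm
  calc circ R (circ R (a + b) (circInv R a)) (a + c)
      = a + (b + (R a + R b)) + ((a + -a) + (-R a + c + R a)) + -(R a + R b) := by
        rw [hR.circ_assoc, hR.circInv_circ, hinner, circ, map_add, add_assoc a b]
    _ = a + (b + (R a + R b)) + (-R a + c + R a) + -(R a + R b) := by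
        rw [add_add_add_neg_add_of_add_add_neg (add_add_neg_self a)]
    _ = a + b + (R a + R b + -R a) + c + (R a + -R b + -R a) := by
        simp only [neg_add_rev, add_assoc]
    _ = a + b + ((R a + -R a) + R b) + c + ((R a + -R a) + -R b) := by
        rw [hR.map_add_map_add_neg, ← map_neg R b, hR.map_add_map_add_neg]
    _ = a + circ R b c := by
        rw [add_add_add_neg_add_of_add_add_neg (hR.add_add_neg' a), add_assoc a b (R b),
          add_assoc a (b + R b) c, add_add_add_neg_add_of_add_add_neg (hR.add_add_neg' a),
          circ, add_assoc a]

end IsCommRotaBaxter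

end IsCliffordAddSemigroup

theorem stmt18_general {S : Type*}
    (add : S → S → S) (neg : S → S)
    (assoc : ∀ a b c, add (add a b) c = add a (add b c))
    (inv1 : ∀ a, add (add a (neg a)) a = a)
    (inv2 : ∀ a, add (add (neg a) a) (neg a) = neg a)
    (inv_unique : ∀ a b, add (add a b) a = a → add (add b a) b = b → b = neg a)
    (central : ∀ e, add e e = e → ∀ x, add e x = add x e)
    (R : S → S)
    (hRB2 : ∀ a, add (add a (R a)) (neg (R a)) = a)
    (hhom : ∀ a b, R (add a b) = add (R a) (R b))
    (himcomm : ∀ a b, add (R a) (R b) = add (R b) (R a))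
    (mul : S → S → S) (i : S → S)
    (hmul : ∀ a b, mul a b = add (add (add a (R a)) b) (neg (R a)))
    (hi : ∀ a, i a = add (add (neg (R a)) (neg a)) (R a))
    : (∀ a b c, add a (mul b c) = mul (mul (add a b) (i a)) (add a c)) ∧
      (∀ a, add a (neg a) = mul (i a) a) := by
  let _ : AddSemigroup S := { add := add, add_assoc := assoc }
  let _ : Neg S := ⟨neg⟩
  have : IsCliffordAddSemigroup S := ⟨inv1, inv2, inv_unique, central⟩
  have hR : IsCliffordAddSemigroup.IsCommRotaBaxter (⟨R, hhom⟩ : S →ₙ+ S) := ⟨hRB2, himcomm⟩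
  obtain rfl : mul = IsCliffordAddSemigroup.circ ⟨R, hhom⟩ := funext₂ hmul
  obtain rfl : i = IsCliffordAddSemigroup.circInv ⟨R, hhom⟩ := funext hi
  exact ⟨hR.add_circ, hR.add_neg_eq_circInv_circ⟩

theorem stmt18 {S : Type*}
    (add : S → S → S) (neg : S → S)
    (assoc : ∀ a b c, add (add a b) c = add a (add b c))
    (inv1 : ∀ a, add (add a (neg a)) a = a)
    (inv2 : ∀ a, add (add (neg a) a) (neg a) = neg a)
    (inv_unique : ∀ a b, add (add a b) a = a → add (add b a) b = b → b = neg a)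
    (comm0 : ∀ a, add a (neg a) = add (neg a) a)
    (central : ∀ e, add e e = e → ∀ x, add e x = add x e)
    (R : S → S)
    (hRB1 : ∀ a b, add (R a) (R b) = R (add (add (add a (R a)) b) (neg (R a))))
    (hRB2 : ∀ a, add (add a (R a)) (neg (R a)) = a)
    (hhom : ∀ a b, R (add a b) = add (R a) (R b))
    (himcomm : ∀ a b, add (R a) (R b) = add (R b) (R a))
    (mul : S → S → S) (i : S → S)
    (hmul : ∀ a b, mul a b = add (add (add a (R a)) b) (neg (R a)))
    (hi : ∀ a, i a = add (add (neg (R a)) (neg a)) (R a))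
    : (∀ a b c, add a (mul b c) = mul (mul (add a b) (i a)) (add a c)) ∧
      (∀ a, add a (neg a) = mul (i a) a) :=
  stmt18_general add neg assoc inv1 inv2 inv_unique central R hRB2 hhom himcomm mul i hmul hi
end

section
/- Let (S,+,∘) be a dual weak brace. Then the socle Soc(S) = {a ∈ S : a + b = a ∘ b and a + b = b + a for all b ∈ S} contains all idempotents of S and is invariant under every map λ_x (i.e., λ_x(Soc(S)) ⊆ Soc(S) for all x ∈ S, where λ_x(a) = -x + x∘a). -/
structure DWB19 (S : Type*) where
  add : S → S → S
  mul : S → S → S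
  neg : S → S
  invc : S → S
  addassoc : ∀ a b c, add (add a b) c = add a (add b c)
  addinv1 : ∀ a, add (add a (neg a)) a = a
  addinv2 : ∀ a, add (add (neg a) a) (neg a) = neg a
  adduniq : ∀ a b, add (add a b) a = a → add (add b a) b = b → b = neg a
  mulassoc : ∀ a b c, mul (mul a b) c = mul a (mul b c)
  mulinv1 : ∀ a, mul (mul a (invc a)) a = a
  mulinv2 : ∀ a, mul (mul (invc a) a) (invc a) = invc a
  muluniq : ∀ a b, mul (mul a b) a = a → mul (mul b a) b = b → b = invc a
  dist : ∀ a b c, mul a (add b c) = add (add (mul a b) (neg a)) (mul a c)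
  winv : ∀ a, mul a (invc a) = add (neg a) a
  addcomm0 : ∀ a, add a (neg a) = add (neg a) a
  mulcomm0 : ∀ a, mul a (invc a) = mul (invc a) a
  addcentral : ∀ e, add e e = e → ∀ x, add e x = add x e
  mulcentral : ∀ e, mul e e = e → ∀ x, mul e x = mul x e

namespace DWB19

variable {S : Type*} (B : DWB19 S)

theorem A_inv1' : ∀ a, B.add a (B.add (B.neg a) a) = a := by
  intro a; rw [← B.addassoc, B.addinv1]

theorem absorbneg1 : ∀ a, B.add (B.neg a) (B.add (B.neg a) a) = B.neg a := by
  intro a; rw [← B.addcomm0 a, ← B.addassoc, B.addinv2]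

theorem Eidem : ∀ a, B.add (B.add (B.neg a) a) (B.add (B.neg a) a) = B.add (B.neg a) a := by
  intro a; rw [B.addassoc, ← B.addassoc a, B.addinv1]

theorem absorb2 : ∀ a, B.add (B.add (B.neg a) a) a = a := by
  intro a; rw [B.addcentral _ (B.Eidem a) a]; exact B.A_inv1' a

theorem swapL : ∀ e, B.add e e = e → ∀ u v, B.add u (B.add e v) = B.add e (B.add u v) := by
  intro e he u v; rw [← B.addassoc, ← B.addcentral e he u, B.addassoc]

theorem negidem : ∀ e, B.add e e = e → B.neg e = e := fun e he =>
  (B.adduniq e e (by rw [he, he]) (by rw [he, he])).symm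

theorem neg_add : ∀ a b, B.neg (B.add a b) = B.add (B.neg b) (B.neg a) := by
  intro a b
  have h1 : B.add (B.add (B.add a b) (B.add (B.neg b) (B.neg a))) (B.add a b) = B.add a b := by
    rw [B.addassoc (B.add a b) (B.add (B.neg b) (B.neg a)) (B.add a b)]
    rw [B.addassoc (B.neg b) (B.neg a) (B.add a b)]
    rw [← B.addassoc (B.neg a) a b]
    rw [B.swapL _ (B.Eidem a) (B.neg b) b]
    rw [B.addassoc a b _]
    rw [B.swapL _ (B.Eidem a) b (B.add (B.neg b) b)]
    rw [B.A_inv1' b]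
    rw [← B.addassoc a _ b]
    rw [B.A_inv1' a]
  have h2 : B.add (B.add (B.add (B.neg b) (B.neg a)) (B.add a b)) (B.add (B.neg b) (B.neg a)) = B.add (B.neg b) (B.neg a) := by
    rw [B.addassoc (B.add (B.neg b) (B.neg a)) (B.add a b) _]
    rw [B.addassoc a b _]
    rw [← B.addassoc b (B.neg b) (B.neg a)]
    rw [B.addcomm0 b]
    rw [B.swapL _ (B.Eidem b) a (B.neg a)]
    rw [B.addcomm0 a]
    rw [B.addassoc (B.neg b) (B.neg a) _]
    rw [B.swapL _ (B.Eidem b) (B.neg a) _]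
    rw [← B.addassoc (B.neg b) (B.add (B.neg b) b) _]
    rw [B.absorbneg1 b]
    rw [B.absorbneg1 a]
  exact (B.adduniq (B.add a b) (B.add (B.neg b) (B.neg a)) h1 h2).symm

/- multiplicative mirrors -/

theorem m_inv1' : ∀ a, B.mul a (B.mul (B.invc a) a) = a := by
  intro a; rw [← B.mulassoc, B.mulinv1]

theorem m_absorbinv : ∀ a, B.mul (B.invc a) (B.mul (B.invc a) a) = B.invc a := by
  intro a; rw [← B.mulcomm0 a, ← B.mulassoc, B.mulinv2]

theorem Midem : ∀ a, B.mul (B.mul (B.invc a) a) (B.mul (B.invc a) a) = B.mul (B.invc a) a := by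
  intro a; rw [B.mulassoc, ← B.mulassoc a, B.mulinv1]

theorem Fidem : ∀ a, B.mul (B.mul a (B.invc a)) (B.mul a (B.invc a)) = B.mul a (B.invc a) := by
  intro a; rw [B.mulassoc, ← B.mulassoc (B.invc a), B.mulinv2]

theorem mulswapL : ∀ e, B.mul e e = e → ∀ u v, B.mul u (B.mul e v) = B.mul e (B.mul u v) := by
  intro e he u v; rw [← B.mulassoc, ← B.mulcentral e he u, B.mulassoc]

theorem invc_mul : ∀ a b, B.invc (B.mul a b) = B.mul (B.invc b) (B.invc a) := by
  intro a b
  have h1 : B.mul (B.mul (B.mul a b) (B.mul (B.invc b) (B.invc a))) (B.mul a b) = B.mul a b := by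
    rw [B.mulassoc (B.mul a b) (B.mul (B.invc b) (B.invc a)) (B.mul a b)]
    rw [B.mulassoc (B.invc b) (B.invc a) (B.mul a b)]
    rw [← B.mulassoc (B.invc a) a b]
    rw [B.mulswapL _ (B.Midem a) (B.invc b) b]
    rw [B.mulassoc a b _]
    rw [B.mulswapL _ (B.Midem a) b (B.mul (B.invc b) b)]
    rw [B.m_inv1' b]
    rw [← B.mulassoc a _ b]
    rw [B.m_inv1' a]
  have h2 : B.mul (B.mul (B.mul (B.invc b) (B.invc a)) (B.mul a b)) (B.mul (B.invc b) (B.invc a)) = B.mul (B.invc b) (B.invc a) := by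
    rw [B.mulassoc (B.mul (B.invc b) (B.invc a)) (B.mul a b) _]
    rw [B.mulassoc a b _]
    rw [← B.mulassoc b (B.invc b) (B.invc a)]
    rw [B.mulcomm0 b]
    rw [B.mulswapL _ (B.Midem b) a (B.invc a)]
    rw [B.mulcomm0 a]
    rw [B.mulassoc (B.invc b) (B.invc a) _]
    rw [B.mulswapL _ (B.Midem b) (B.invc a) _]
    rw [← B.mulassoc (B.invc b) (B.mul (B.invc b) b) _]
    rw [B.m_absorbinv b]
    rw [B.m_absorbinv a]
  exact (B.muluniq (B.mul a b) (B.mul (B.invc b) (B.invc a)) h1 h2).symm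

/- idempotent transfer -/

theorem idem_mul : ∀ e, B.add e e = e → B.mul e e = e := by
  intro e he
  have hne := B.negidem e he
  have h1 : B.mul e (B.invc e) = e := by rw [B.winv, hne, he]
  calc B.mul e e = B.mul (B.mul e (B.invc e)) (B.mul e (B.invc e)) := by rw [h1]
    _ = B.mul e (B.mul (B.mul (B.invc e) e) (B.invc e)) := by
          rw [B.mulassoc, ← B.mulassoc (B.invc e)]
    _ = B.mul e (B.invc e) := by rw [B.mulinv2]
    _ = e := h1

theorem idem_add : ∀ u, B.mul u u = u → B.add u u = u := by
  intro u hu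
  have hi : B.invc u = u := (B.muluniq u u (by rw [hu, hu]) (by rw [hu, hu])).symm
  have h1 : u = B.add (B.neg u) u := by rw [← B.winv u, hi, hu]
  calc B.add u u = B.add (B.add (B.neg u) u) (B.add (B.neg u) u) := by rw [← h1]
    _ = B.add (B.neg u) u := B.Eidem u
    _ = u := h1.symm

theorem g_e : ∀ e f, B.add e e = e → B.add f f = f → B.add e (B.mul e f) = B.mul e f := by
  intro e f he hf
  have hem := B.idem_mul e he
  have hfm := B.idem_mul f hf
  have hgm : B.mul (B.mul e f) (B.mul e f) = B.mul e f := by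
    rw [B.mulassoc, B.mulswapL e hem f f, hfm, ← B.mulassoc, hem]
  have hga := B.idem_add (B.mul e f) hgm
  have key : B.mul e f = B.add e (B.mul e f) := by
    conv_lhs => rw [← hf]
    rw [B.dist e f f, B.negidem e he, ← B.addcentral e he (B.mul e f), B.addassoc, hga]
  exact key.symm

theorem E_mul : ∀ a c, B.add (B.neg (B.mul a c)) (B.mul a c)
    = B.mul (B.add (B.neg a) a) (B.add (B.neg c) c) := by
  intro a c
  calc B.add (B.neg (B.mul a c)) (B.mul a c)
      = B.mul (B.mul a c) (B.invc (B.mul a c)) := (B.winv _).symm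
    _ = B.mul (B.mul a c) (B.mul (B.invc c) (B.invc a)) := by rw [B.invc_mul]
    _ = B.mul a (B.mul (B.mul c (B.invc c)) (B.invc a)) := by
          rw [B.mulassoc, ← B.mulassoc c]
    _ = B.mul a (B.mul (B.invc a) (B.mul c (B.invc c))) := by
          rw [B.mulcentral (B.mul c (B.invc c)) (B.Fidem c) (B.invc a)]
    _ = B.mul (B.mul a (B.invc a)) (B.mul c (B.invc c)) := (B.mulassoc _ _ _).symm
    _ = B.mul (B.add (B.neg a) a) (B.add (B.neg c) c) := by rw [B.winv, B.winv]

theorem absorb_mul : ∀ a c, B.add (B.add (B.neg a) a) (B.mul a c) = B.mul a c := by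
  intro a c
  calc B.add (B.add (B.neg a) a) (B.mul a c)
      = B.add (B.add (B.neg a) a) (B.add (B.add (B.neg (B.mul a c)) (B.mul a c)) (B.mul a c)) := by
        rw [B.absorb2 (B.mul a c)]
    _ = B.add (B.add (B.add (B.neg a) a) (B.add (B.neg (B.mul a c)) (B.mul a c))) (B.mul a c) :=
        (B.addassoc _ _ _).symm
    _ = B.add (B.add (B.add (B.neg a) a) (B.mul (B.add (B.neg a) a) (B.add (B.neg c) c))) (B.mul a c) := by
        rw [B.E_mul a c]
    _ = B.add (B.mul (B.add (B.neg a) a) (B.add (B.neg c) c)) (B.mul a c) := by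
        rw [B.g_e _ _ (B.Eidem a) (B.Eidem c)]
    _ = B.add (B.add (B.neg (B.mul a c)) (B.mul a c)) (B.mul a c) := by rw [B.E_mul a c]
    _ = B.mul a c := B.absorb2 (B.mul a c)

theorem mul_add_lam : ∀ a c, B.add a (B.add (B.neg a) (B.mul a c)) = B.mul a c := by
  intro a c
  rw [← B.addassoc a (B.neg a) (B.mul a c), B.addcomm0 a, B.absorb_mul a c]

theorem lamadd : ∀ x b c, B.add (B.add (B.neg x) (B.mul x b)) (B.add (B.neg x) (B.mul x c))
    = B.add (B.neg x) (B.mul x (B.add b c)) := by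
  intro x b c
  rw [B.dist, B.addassoc (B.neg x) (B.mul x b), ← B.addassoc (B.mul x b)]

theorem lamneg : ∀ x b, B.add (B.neg x) (B.mul x (B.neg b))
    = B.neg (B.add (B.neg x) (B.mul x b)) := by
  intro x b
  exact B.adduniq (B.add (B.neg x) (B.mul x b)) (B.add (B.neg x) (B.mul x (B.neg b)))
    (by rw [B.lamadd, B.lamadd, B.addinv1]) (by rw [B.lamadd, B.lamadd, B.addinv2])

theorem lam_comp : ∀ x y b, B.add (B.neg x) (B.mul x (B.add (B.neg y) (B.mul y b)))
    = B.add (B.neg (B.mul x y)) (B.mul (B.mul x y) b) := by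
  intro x y b
  have hxy : B.neg (B.mul x y) = B.add (B.neg (B.add (B.neg x) (B.mul x y))) (B.neg x) := by
    conv_lhs => rw [← B.mul_add_lam x y]
    rw [B.neg_add]
  calc B.add (B.neg x) (B.mul x (B.add (B.neg y) (B.mul y b)))
      = B.add (B.neg x) (B.add (B.add (B.mul x (B.neg y)) (B.neg x)) (B.mul x (B.mul y b))) := by
        rw [B.dist]
    _ = B.add (B.add (B.neg x) (B.mul x (B.neg y))) (B.add (B.neg x) (B.mul (B.mul x y) b)) := by
        rw [← B.mulassoc, B.addassoc (B.mul x (B.neg y)), ← B.addassoc (B.neg x)]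
    _ = B.add (B.neg (B.add (B.neg x) (B.mul x y))) (B.add (B.neg x) (B.mul (B.mul x y) b)) := by
        rw [B.lamneg]
    _ = B.add (B.neg (B.mul x y)) (B.mul (B.mul x y) b) := by
        rw [hxy, B.addassoc]

/- idempotents act by addition -/

theorem idem_mul_add : ∀ e f, B.add e e = e → B.add f f = f → B.add e f = f → B.mul e f = f := by
  intro e f he hf hef
  have hem := B.idem_mul e he
  have hfm := B.idem_mul f hf
  have hd := B.dist f e f
  rw [hef, hfm, B.negidem f hf, B.addassoc, hf] at hd
  have h5 : B.add (B.mul f e) f = f := hd.symm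
  have h6 : B.add (B.mul f e) f = B.mul f e := by
    rw [← B.addcentral f hf (B.mul f e)]
    exact B.g_e f e hf he
  have h7 : B.mul f e = f := h6.symm.trans h5
  rw [B.mulcentral e hem f]
  exact h7

theorem act_idem : ∀ e, B.add e e = e → ∀ c, B.add e c = c → B.mul e c = c := by
  intro e he c hec
  have hEc : B.add e (B.add (B.neg c) c) = B.add (B.neg c) c := by
    calc B.add e (B.add (B.neg c) c) = B.add (B.add e (B.neg c)) c := (B.addassoc _ _ _).symm
      _ = B.add (B.add (B.neg c) e) c := by rw [B.addcentral e he (B.neg c)]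
      _ = B.add (B.neg c) (B.add e c) := B.addassoc _ _ _
      _ = B.add (B.neg c) c := by rw [hec]
  have hm : B.mul e (B.add (B.neg c) c) = B.add (B.neg c) c :=
    B.idem_mul_add e (B.add (B.neg c) c) he (B.Eidem c) hEc
  calc B.mul e c = B.mul e (B.mul (B.mul c (B.invc c)) c) := by rw [B.mulinv1 c]
    _ = B.mul e (B.mul (B.add (B.neg c) c) c) := by rw [B.winv]
    _ = B.mul (B.mul e (B.add (B.neg c) c)) c := (B.mulassoc _ _ _).symm
    _ = B.mul (B.add (B.neg c) c) c := by rw [hm]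
    _ = B.mul (B.mul c (B.invc c)) c := by rw [← B.winv]
    _ = c := B.mulinv1 c

theorem part1mul : ∀ e, B.add e e = e → ∀ b, B.add e b = B.mul e b := by
  intro e he b
  have hc : B.add e (B.add e b) = B.add e b := by rw [← B.addassoc, he]
  have h2 : B.mul e (B.add e b) = B.add e b := B.act_idem e he (B.add e b) hc
  have h3 : B.mul e (B.add e b) = B.mul e b := by
    have hd := B.dist e e b
    rw [B.idem_mul e he, B.negidem e he, he] at hd
    have habs : B.add e (B.mul e b) = B.mul e b := by
      have h := B.absorb_mul e b
      rw [B.negidem e he, he] at h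
      exact h
    rw [habs] at hd
    exact hd
  exact h2.symm.trans h3

/- part 2 pieces -/

theorem lamlaminv : ∀ x b, B.add (B.neg x) (B.mul x (B.add (B.neg (B.invc x)) (B.mul (B.invc x) b)))
    = B.add (B.add (B.neg x) x) b := by
  intro x b
  rw [B.lam_comp x (B.invc x) b, B.winv x, B.negidem _ (B.Eidem x),
    ← B.part1mul _ (B.Eidem x) b, ← B.addassoc, B.Eidem x]

theorem ExD : ∀ x a, B.add (B.add (B.neg x) x) (B.add (B.neg x) (B.mul x a))
    = B.add (B.neg x) (B.mul x a) := by
  intro x a; rw [← B.addassoc, B.addinv2]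

theorem dEx : ∀ x a, B.add (B.add (B.neg x) (B.mul x a)) (B.add (B.neg x) x)
    = B.add (B.neg x) (B.mul x a) := by
  intro x a
  rw [← B.addcentral (B.add (B.neg x) x) (B.Eidem x) (B.add (B.neg x) (B.mul x a))]
  exact B.ExD x a

theorem soc_comm (x a : S) (aC : ∀ b, B.add a b = B.add b a) :
    ∀ b, B.add (B.add (B.neg x) (B.mul x a)) b = B.add b (B.add (B.neg x) (B.mul x a)) := by
  have dlam : ∀ c, B.add (B.add (B.neg x) (B.mul x a)) (B.add (B.neg x) (B.mul x c))
      = B.add (B.add (B.neg x) (B.mul x c)) (B.add (B.neg x) (B.mul x a)) := by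
    intro c
    rw [B.lamadd x a c, B.lamadd x c a, aC c]
  intro b
  have h1 := dlam (B.add (B.neg (B.invc x)) (B.mul (B.invc x) b))
  rw [B.lamlaminv x b] at h1
  calc B.add (B.add (B.neg x) (B.mul x a)) b
      = B.add (B.add (B.add (B.neg x) (B.mul x a)) (B.add (B.neg x) x)) b := by rw [B.dEx x a]
    _ = B.add (B.add (B.neg x) (B.mul x a)) (B.add (B.add (B.neg x) x) b) := B.addassoc _ _ _
    _ = B.add (B.add (B.add (B.neg x) x) b) (B.add (B.neg x) (B.mul x a)) := h1
    _ = B.add (B.add (B.neg x) x) (B.add b (B.add (B.neg x) (B.mul x a))) := B.addassoc _ _ _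
    _ = B.add b (B.add (B.add (B.neg x) x) (B.add (B.neg x) (B.mul x a))) :=
        (B.swapL _ (B.Eidem x) b _).symm
    _ = B.add b (B.add (B.neg x) (B.mul x a)) := by rw [B.ExD x a]

theorem soc_mul (x a : S) (aC : ∀ b, B.add a b = B.add b a)
    (aM : ∀ b, B.add a b = B.mul a b) :
    ∀ b, B.mul (B.add (B.neg x) (B.mul x a)) b = B.add (B.add (B.neg x) (B.mul x a)) b := by
  have dC := B.soc_comm x a aC
  have hd : B.mul x (B.mul a (B.invc x)) = B.add (B.neg x) (B.mul x a) := by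
    calc B.mul x (B.mul a (B.invc x))
        = B.mul x (B.add a (B.invc x)) := by rw [aM (B.invc x)]
      _ = B.add (B.add (B.mul x a) (B.neg x)) (B.mul x (B.invc x)) := B.dist x a (B.invc x)
      _ = B.add (B.add (B.mul x a) (B.neg x)) (B.add (B.neg x) x) := by rw [B.winv]
      _ = B.add (B.mul x a) (B.add (B.neg x) (B.add (B.neg x) x)) := B.addassoc _ _ _
      _ = B.add (B.mul x a) (B.neg x) := by rw [B.absorbneg1 x]
      _ = B.add (B.add x (B.add (B.neg x) (B.mul x a))) (B.neg x) := by rw [B.mul_add_lam x a]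
      _ = B.add x (B.add (B.add (B.neg x) (B.mul x a)) (B.neg x)) := B.addassoc _ _ _
      _ = B.add x (B.add (B.neg x) (B.add (B.neg x) (B.mul x a))) := by rw [dC (B.neg x)]
      _ = B.add (B.add x (B.neg x)) (B.add (B.neg x) (B.mul x a)) := (B.addassoc _ _ _).symm
      _ = B.add (B.add (B.neg x) x) (B.add (B.neg x) (B.mul x a)) := by rw [B.addcomm0 x]
      _ = B.add (B.neg x) (B.mul x a) := B.ExD x a
  intro b
  have h1 : B.add (B.neg (B.add (B.neg x) (B.mul x a))) (B.mul (B.add (B.neg x) (B.mul x a)) b)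
      = B.add (B.add (B.neg (B.add (B.neg x) (B.mul x a))) (B.add (B.neg x) (B.mul x a)))
          (B.add (B.add (B.neg x) x) b) := by
    conv_lhs => rw [← hd]
    rw [← B.lam_comp x (B.mul a (B.invc x)) b]
    rw [← B.lam_comp a (B.invc x) b]
    rw [← aM (B.add (B.neg (B.invc x)) (B.mul (B.invc x) b))]
    rw [← B.addassoc (B.neg a) a (B.add (B.neg (B.invc x)) (B.mul (B.invc x) b))]
    rw [← B.lamadd x (B.add (B.neg a) a) (B.add (B.neg (B.invc x)) (B.mul (B.invc x) b))]
    rw [B.lamlaminv x b]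
    rw [← B.lamadd x (B.neg a) a]
    rw [B.lamneg x a]
  calc B.mul (B.add (B.neg x) (B.mul x a)) b
      = B.add (B.add (B.neg x) (B.mul x a))
          (B.add (B.neg (B.add (B.neg x) (B.mul x a))) (B.mul (B.add (B.neg x) (B.mul x a)) b)) :=
        (B.mul_add_lam _ b).symm
    _ = B.add (B.add (B.neg x) (B.mul x a))
          (B.add (B.add (B.neg (B.add (B.neg x) (B.mul x a))) (B.add (B.neg x) (B.mul x a)))
            (B.add (B.add (B.neg x) x) b)) := by rw [h1]
    _ = B.add (B.add (B.add (B.neg x) (B.mul x a))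
          (B.add (B.neg (B.add (B.neg x) (B.mul x a))) (B.add (B.neg x) (B.mul x a))))
            (B.add (B.add (B.neg x) x) b) := (B.addassoc _ _ _).symm
    _ = B.add (B.add (B.neg x) (B.mul x a)) (B.add (B.add (B.neg x) x) b) := by
        rw [B.A_inv1' (B.add (B.neg x) (B.mul x a))]
    _ = B.add (B.add (B.add (B.neg x) (B.mul x a)) (B.add (B.neg x) x)) b := (B.addassoc _ _ _).symm
    _ = B.add (B.add (B.neg x) (B.mul x a)) b := by rw [B.dEx x a]

theorem socle (Soc : Set S)
    (hSoc : ∀ a, a ∈ Soc ↔ (∀ b, B.add a b = B.mul a b ∧ B.add a b = B.add b a)) :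
    (∀ e, B.add e e = e → e ∈ Soc) ∧
      (∀ x a, a ∈ Soc → B.add (B.neg x) (B.mul x a) ∈ Soc) := by
  constructor
  · intro e he
    exact (hSoc e).mpr fun b => ⟨B.part1mul e he b, B.addcentral e he b⟩
  · intro x a hain
    have ha := (hSoc a).mp hain
    have aM : ∀ b, B.add a b = B.mul a b := fun b => (ha b).1
    have aC : ∀ b, B.add a b = B.add b a := fun b => (ha b).2
    exact (hSoc _).mpr fun b => ⟨(B.soc_mul x a aC aM b).symm, B.soc_comm x a aC b⟩

end DWB19

theorem stmt19 {S : Type*}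
    (add mul : S → S → S) (neg invc : S → S)
    (addassoc : ∀ a b c, add (add a b) c = add a (add b c))
    (addinv1 : ∀ a, add (add a (neg a)) a = a)
    (addinv2 : ∀ a, add (add (neg a) a) (neg a) = neg a)
    (adduniq : ∀ a b, add (add a b) a = a → add (add b a) b = b → b = neg a)
    (mulassoc : ∀ a b c, mul (mul a b) c = mul a (mul b c))
    (mulinv1 : ∀ a, mul (mul a (invc a)) a = a)
    (mulinv2 : ∀ a, mul (mul (invc a) a) (invc a) = invc a)
    (muluniq : ∀ a b, mul (mul a b) a = a → mul (mul b a) b = b → b = invc a)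
    (dist : ∀ a b c, mul a (add b c) = add (add (mul a b) (neg a)) (mul a c))
    (winv : ∀ a, mul a (invc a) = add (neg a) a)
    (addcomm0 : ∀ a, add a (neg a) = add (neg a) a)
    (mulcomm0 : ∀ a, mul a (invc a) = mul (invc a) a)
    (addcentral : ∀ e, add e e = e → ∀ x, add e x = add x e)
    (mulcentral : ∀ e, mul e e = e → ∀ x, mul e x = mul x e)
    (Soc : Set S)
    (hSoc : ∀ a, a ∈ Soc ↔ (∀ b, add a b = mul a b ∧ add a b = add b a)) :
    (∀ e, add e e = e → e ∈ Soc) ∧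
      (∀ x a, a ∈ Soc → add (neg x) (mul x a) ∈ Soc) := by
  exact DWB19.socle
    { add := add, mul := mul, neg := neg, invc := invc,
      addassoc := addassoc, addinv1 := addinv1, addinv2 := addinv2, adduniq := adduniq,
      mulassoc := mulassoc, mulinv1 := mulinv1, mulinv2 := mulinv2, muluniq := muluniq,
      dist := dist, winv := winv, addcomm0 := addcomm0, mulcomm0 := mulcomm0,
      addcentral := addcentral, mulcentral := mulcentral }
    Soc hSoc
end
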